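/- arXiv:1904.08902 — 12 statements merged into one kernel-verified Lean document; each statement's English description precedes it below -/
import Mathlib

section
/- A T0 topological space is completely regular if and only if it has a base that is a weakly completely regular family. -/
/-- A base of a topological space: a family of open sets such that every open
set is a union of members of the family. -/
def IsTopBase {X : Type*} [TopologicalSpace X] (B : Set (Set X)) : Prop :=
  (∀ U ∈ B, IsOpen U) ∧ ∀ U : Set X, IsOpen U → ∃ S ⊆ B, U = ⋃₀ S

/-- A π-base: a family of nonempty open sets such that every nonempty open set
contains a member of the family. -/
def IsPiBase {X : Type*} [TopologicalSpace X] (B : Set (Set X)) : Prop :=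
  (∀ U ∈ B, IsOpen U ∧ U.Nonempty) ∧
  ∀ U : Set X, IsOpen U → U.Nonempty → ∃ V ∈ B, V ⊆ U

/-- A cozero set: a set of the form `f ⁻¹' (0,1]` for a continuous `f : X → [0,1]`. -/
def IsCozeroSet {X : Type*} [TopologicalSpace X] (U : Set X) : Prop :=
  ∃ f : X → ℝ, Continuous f ∧ (∀ x, f x ∈ Set.Icc (0 : ℝ) 1) ∧
    U = f ⁻¹' Set.Ioc (0 : ℝ) 1

/-- `s` witnesses the FNS property for the family `B`: it assigns to each
`U ∈ B` a finite subfamily `s U ⊆ B` such that whenever `U, V ∈ B` are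
disjoint there are disjoint `W_U, W_V ∈ s U ∩ s V` with `U ⊆ W_U`, `V ⊆ W_V`. -/
def FNSWitness {X : Type*} (B : Set (Set X)) (s : Set X → Set (Set X)) : Prop :=
  (∀ U ∈ B, s U ⊆ B ∧ (s U).Finite) ∧
  ∀ U ∈ B, ∀ V ∈ B, Disjoint U V →
    ∃ WU ∈ s U ∩ s V, ∃ WV ∈ s U ∩ s V, Disjoint WU WV ∧ U ⊆ WU ∧ V ⊆ WV

/-- A family `B` has the FNS property if some `s` witnesses it. -/
def HasFNS {X : Type*} (B : Set (Set X)) : Prop :=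
  ∃ s : Set X → Set (Set X), FNSWitness B s

/-- A space has the π-FNS property if some π-base of it has the FNS property. -/
def HasPiFNS (X : Type*) [TopologicalSpace X] : Prop :=
  ∃ B : Set (Set X), IsPiBase B ∧ HasFNS B

/-- `u, l` witness the FN property for the family `F`. -/
def FNWitness {X : Type*} (F : Set (Set X)) (u l : Set X → Set (Set X)) : Prop :=
  (∀ V ∈ F, (u V).Finite ∧ ∀ U ∈ u V, U ∈ F ∧ V ⊆ U) ∧
  (∀ V ∈ F, (l V).Finite ∧ ∀ U ∈ l V, U ∈ F ∧ U ⊆ V) ∧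
  ∀ V ∈ F, ∀ W ∈ F, V ⊆ W → (u V ∩ l W).Nonempty

/-- A family `F` has the FN property if some pair `u, l` witnesses it. -/
def HasFN {X : Type*} (F : Set (Set X)) : Prop :=
  ∃ u l : Set X → Set (Set X), FNWitness F u l

/-- A family `P` of subsets of `X` is weakly completely regular: for any
finitely many `U₁, …, U_k ∈ P` (`k ≥ 1`) there are sequences `(A n)`, `(B n)`
of finite subfamilies of `P` with
`U₁ ∩ … ∩ U_k = ⋃ n, ⋃₀ A n = ⋃ n, (X \ ⋃₀ B n)` and
`⋃₀ A n ⊆ X \ ⋃₀ B n` for each `n`. -/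
def WeaklyCompletelyRegularFamily {X : Type*} (P : Set (Set X)) : Prop :=
  ∀ S : Set (Set X), S.Finite → S.Nonempty → S ⊆ P →
    ∃ A B : ℕ → Set (Set X),
      (∀ n, A n ⊆ P ∧ (A n).Finite) ∧ (∀ n, B n ⊆ P ∧ (B n).Finite) ∧
      ⋂₀ S = ⋃ n, ⋃₀ A n ∧ ⋂₀ S = ⋃ n, (⋃₀ B n)ᶜ ∧
      ∀ n, ⋃₀ A n ⊆ (⋃₀ B n)ᶜ

/-- The equivalence relation `x ~_P y` iff `x, y` belong to exactly the same
members of `P`. -/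
def famSetoid {X : Type*} (P : Set (Set X)) : Setoid X where
  r x y := ∀ V ∈ P, (x ∈ V ↔ y ∈ V)
  iseqv := ⟨fun _ _ _ => Iff.rfl, fun h V hV => (h V hV).symm,
    fun h1 h2 V hV => (h1 V hV).trans (h2 V hV)⟩

/-!
In a completely regular space the cozero sets form a base; they are closed under finite
intersections, and a cozero set `{f > 0}` is the union both of the cozero sets `{f > 1/(n+1)}`
and of the zero sets `{f ≥ 1/(n+1)}`, which are complements of the cozero sets `{f < 1/(n+1)}`.

Conversely, to separate `x` from a closed set, pick a basic `V ∋ x` missing it and close `{V}`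
under the witnesses of weak complete regularity. This gives a countable weakly completely
regular family `F`. The topology generated by `F` is coarser than the given one, second
countable and regular (the open set `⋃₀ A n` lies inside the closed set `(⋃₀ B n)ᶜ ⊆ ⋂₀ S`),
hence normal, and Urysohn's lemma in it separates `x` from `Vᶜ`.
-/

open Set Topology TopologicalSpace

section Cozero

variable {X : Type*} [TopologicalSpace X]

theorem isCozeroSet_preimage_Ioi {f : X → ℝ} (hf : Continuous f) (t : ℝ) :
    IsCozeroSet (f ⁻¹' Ioi t) := by
  refine ⟨fun x => min 1 (max 0 (f x - t)), by fun_prop,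
    fun x => ⟨le_min zero_le_one (le_max_left _ _), min_le_left _ _⟩, ?_⟩
  ext x
  simp

theorem isCozeroSet_preimage_Iio {f : X → ℝ} (hf : Continuous f) (t : ℝ) :
    IsCozeroSet (f ⁻¹' Iio t) := by
  simpa [preimage] using isCozeroSet_preimage_Ioi hf.neg (-t)

theorem isCozeroSet_univ : IsCozeroSet (univ : Set X) := by
  simpa using isCozeroSet_preimage_Ioi (continuous_const (y := (0 : ℝ))) (-1)

theorem IsCozeroSet.exists_eq_preimage_Ioi {U : Set X} (hU : IsCozeroSet U) :
    ∃ f : X → ℝ, Continuous f ∧ U = f ⁻¹' Ioi 0 := by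
  obtain ⟨f, hf, hf01, rfl⟩ := hU
  refine ⟨f, hf, ?_⟩
  ext x
  simpa using fun _ => (hf01 x).2

theorem IsCozeroSet.isOpen {U : Set X} (hU : IsCozeroSet U) : IsOpen U := by
  obtain ⟨f, hf, rfl⟩ := hU.exists_eq_preimage_Ioi
  exact isOpen_Ioi.preimage hf

theorem IsCozeroSet.inter {U V : Set X} (hU : IsCozeroSet U) (hV : IsCozeroSet V) :
    IsCozeroSet (U ∩ V) := by
  obtain ⟨f, hf, rfl⟩ := hU.exists_eq_preimage_Ioi
  obtain ⟨g, hg, rfl⟩ := hV.exists_eq_preimage_Ioi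
  convert isCozeroSet_preimage_Ioi (hf.min hg) 0 using 1
  ext x
  simp

theorem IsCozeroSet.sInter {S : Set (Set X)} (hS : S.Finite) (h : ∀ U ∈ S, IsCozeroSet U) :
    IsCozeroSet (⋂₀ S) := by
  induction S, hS using Set.Finite.induction_on with
  | empty => simpa using isCozeroSet_univ
  | insert _ _ ih =>
    rw [sInter_insert]
    exact (h _ (mem_insert _ _)).inter (ih fun U hU => h U (mem_insert_of_mem _ hU))

theorem weaklyCompletelyRegularFamily_isCozeroSet :
    WeaklyCompletelyRegularFamily {U : Set X | IsCozeroSet U} := by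
  intro S hS _ hSP
  obtain ⟨f, hf, hfS⟩ := (IsCozeroSet.sInter hS hSP).exists_eq_preimage_Ioi
  have hpos : ∀ n : ℕ, (0 : ℝ) < 1 / (n + 1) := fun n => by positivity
  refine ⟨fun n => {f ⁻¹' Ioi (1 / (n + 1))}, fun n => {f ⁻¹' Iio (1 / (n + 1))},
    fun n => ⟨singleton_subset_iff.2 (isCozeroSet_preimage_Ioi hf _), finite_singleton _⟩,
    fun n => ⟨singleton_subset_iff.2 (isCozeroSet_preimage_Iio hf _), finite_singleton _⟩,
    ?_, ?_, fun n => ?_⟩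
  · ext x
    simp only [hfS, sUnion_singleton, mem_preimage, mem_Ioi, mem_iUnion]
    exact ⟨exists_nat_one_div_lt, fun ⟨n, hn⟩ => (hpos n).trans hn⟩
  · ext x
    simp only [hfS, sUnion_singleton, mem_preimage, mem_Ioi, mem_iUnion, mem_compl_iff,
      mem_Iio, not_lt]
    exact ⟨fun hx => (exists_nat_one_div_lt hx).imp fun _ => le_of_lt,
      fun ⟨n, hn⟩ => (hpos n).trans_le hn⟩
  · rw [sUnion_singleton, sUnion_singleton, ← preimage_compl, compl_Iio]
    exact preimage_mono Ioi_subset_Ici_self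

theorem CompletelyRegularSpace.isTopologicalBasis_isCozeroSet [CompletelyRegularSpace X] :
    IsTopologicalBasis {U : Set X | IsCozeroSet U} := by
  refine isTopologicalBasis_of_isOpen_of_nhds (fun U hU => hU.isOpen) fun x U hxU hU => ?_
  obtain ⟨f, hf, hfx, hfU⟩ := CompletelyRegularSpace.completely_regular_isOpen x U hU hxU
  refine ⟨(fun y => (f y : ℝ)) ⁻¹' Iio 1,
    isCozeroSet_preimage_Iio (continuous_subtype_val.comp hf) 1, by simp [hfx], fun y hy => ?_⟩
  by_contra hyU
  simp [hfU hyU] at hy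

end Cozero

theorem isTopBase_iff_isTopologicalBasis {X : Type*} [TopologicalSpace X] {B : Set (Set X)} :
    IsTopBase B ↔ IsTopologicalBasis B := by
  refine ⟨fun ⟨hopen, hunion⟩ =>
    isTopologicalBasis_of_isOpen_of_nhds hopen fun x U hxU hU => ?_,
    fun hB => ⟨fun U hU => hB.isOpen hU, fun U hU => hB.open_eq_sUnion hU⟩⟩
  obtain ⟨S, hSB, rfl⟩ := hunion U hU
  obtain ⟨V, hVS, hxV⟩ := hxU
  exact ⟨V, hSB hVS, hxV, subset_sUnion_of_mem hVS⟩

theorem Set.Countable.exists_countable_finitary_closure {α : Type*} {P C : Set α}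
    (c : Set α → Set α) (hc : ∀ T ⊆ P, T.Finite → c T ⊆ P ∧ (c T).Countable)
    (hC : C.Countable) (hCP : C ⊆ P) :
    ∃ D, C ⊆ D ∧ D ⊆ P ∧ D.Countable ∧ ∀ T ⊆ D, T.Finite → c T ⊆ D := by
  set step : Set α → Set α := fun E => E ∪ ⋃ T ∈ {T | T.Finite ∧ T ⊆ E}, c T
  have hstep : ∀ E ⊆ P, E.Countable → step E ⊆ P ∧ (step E).Countable := fun E hEP hE =>
    ⟨union_subset hEP (iUnion₂_subset fun T hT => (hc T (hT.2.trans hEP) hT.1).1),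
      hE.union ((countable_ofPred_finite_subset hE).biUnion fun T hT =>
        (hc T (hT.2.trans hEP) hT.1).2)⟩
  have hiter : ∀ k, step^[k] C ⊆ P ∧ (step^[k] C).Countable := by
    intro k
    induction k with
    | zero => exact ⟨hCP, hC⟩
    | succ k ih => rw [Function.iterate_succ_apply']; exact hstep _ ih.1 ih.2
  have hmono : Monotone fun k => step^[k] C := monotone_nat_of_le_succ fun k => by
    rw [Function.iterate_succ_apply' step k C]
    exact subset_union_left
  refine ⟨⋃ k, step^[k] C, subset_iUnion (fun k => step^[k] C) 0,
    iUnion_subset fun k => (hiter k).1, countable_iUnion fun k => (hiter k).2,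
    fun T hTD hT => ?_⟩
  obtain ⟨k, hk⟩ := hmono.directed_le.exists_mem_subset_of_finset_subset_biUnion
    (s := hT.toFinset) (by simpa using hTD)
  rw [hT.coe_toFinset] at hk
  refine Subset.trans ?_ (subset_iUnion (fun k => step^[k] C) (k + 1))
  rw [Function.iterate_succ_apply']
  have hTk : T ∈ {T | T.Finite ∧ T ⊆ step^[k] C} := ⟨hT, hk⟩
  exact (subset_biUnion_of_mem (u := c) hTk).trans subset_union_right

section WCR

variable {X : Type*}

theorem WeaklyCompletelyRegularFamily.exists_countable_subfamily {P C : Set (Set X)}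
    (hP : WeaklyCompletelyRegularFamily P) (hC : C.Countable) (hCP : C ⊆ P) :
    ∃ F, C ⊆ F ∧ F ⊆ P ∧ F.Countable ∧ WeaklyCompletelyRegularFamily F := by
  choose! A B hA hB hAS hBS hAB using hP
  -- `A ∅` and `B ∅` are junk values of `choose!` and must not enter the closure.
  obtain ⟨F, hCF, hFP, hF, hFc⟩ := hC.exists_countable_finitary_closure
    (fun S => ⋃ (_ : S.Nonempty), ⋃ n, A S n ∪ B S n)
    (fun T hTP hT => ⟨iUnion_subset fun hne => iUnion_subset fun n =>
        union_subset (hA T hT hne hTP n).1 (hB T hT hne hTP n).1,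
      countable_iUnion fun hne => countable_iUnion fun n =>
        ((hA T hT hne hTP n).2.union (hB T hT hne hTP n).2).countable⟩) hCP
  refine ⟨F, hCF, hFP, hF, fun S hS hne hSF => ?_⟩
  have hSP := hSF.trans hFP
  have hABF : ∀ n, A S n ∪ B S n ⊆ F := fun n U hU =>
    hFc S hSF hS (mem_iUnion.2 ⟨hne, mem_iUnion.2 ⟨n, hU⟩⟩)
  exact ⟨A S, B S, fun n => ⟨subset_union_left.trans (hABF n), (hA S hS hne hSP n).2⟩,
    fun n => ⟨subset_union_right.trans (hABF n), (hB S hS hne hSP n).2⟩,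
    hAS S hS hne hSP, hBS S hS hne hSP, hAB S hS hne hSP⟩

theorem WeaklyCompletelyRegularFamily.regularSpace_generateFrom {F : Set (Set X)}
    (hF : WeaklyCompletelyRegularFamily F) : @RegularSpace X (generateFrom F) := by
  let := generateFrom F
  have hopen : ∀ S ⊆ F, IsOpen (⋃₀ S) := fun S hS =>
    isOpen_sUnion fun U hU => isOpen_generateFrom_of_mem (hS hU)
  refine .of_exists_mem_nhds_isClosed_subset fun z s hs => ?_
  obtain ⟨_, ⟨S, ⟨hS, hSF⟩, rfl⟩, hzS, hSs⟩ :=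
    (isTopologicalBasis_of_subbasis (s := F) rfl).mem_nhds_iff.mp hs
  rcases S.eq_empty_or_nonempty with rfl | hne
  · exact ⟨univ, Filter.univ_mem, isClosed_univ, by simpa using hSs⟩
  obtain ⟨A, B, hA, hB, hSA, hSB, hAB⟩ := hF S hS hne hSF
  obtain ⟨n, hn⟩ := mem_iUnion.1 (hSA ▸ hzS : z ∈ ⋃ n, ⋃₀ A n)
  exact ⟨(⋃₀ B n)ᶜ, Filter.mem_of_superset ((hopen _ (hA n).1).mem_nhds hn) (hAB n),
    (hopen _ (hB n).1).isClosed_compl, (hSB ▸ subset_iUnion _ n).trans hSs⟩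

theorem WeaklyCompletelyRegularFamily.completelyRegularSpace_generateFrom {F : Set (Set X)}
    (hF : WeaklyCompletelyRegularFamily F) (hc : F.Countable) :
    @CompletelyRegularSpace X (generateFrom F) :=
  letI := generateFrom F
  haveI := SecondCountableTopology.mk' hc
  haveI := hF.regularSpace_generateFrom
  inferInstance

end WCR

theorem CompletelyRegularSpace.of_exists_coarser {X : Type*} [t : TopologicalSpace X]
    (h : ∀ x U, IsOpen U → x ∈ U → ∃ t' : TopologicalSpace X, t ≤ t' ∧
      @CompletelyRegularSpace X t' ∧ ∃ V, IsOpen[t'] V ∧ x ∈ V ∧ V ⊆ U) :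
    CompletelyRegularSpace X := by
  refine completelyRegularSpace_iff_isOpen.2 fun x U hU hxU => ?_
  obtain ⟨t', hle, ht', V, hV, hxV, hVU⟩ := h x U hU hxU
  obtain ⟨f, hf, hfx, hfV⟩ :=
    @CompletelyRegularSpace.completely_regular_isOpen X t' ht' x V hV hxV
  exact ⟨f, continuous_le_dom hle hf, hfx, hfV.mono (compl_subset_compl.2 hVU)⟩

theorem WeaklyCompletelyRegularFamily.completelyRegularSpace {X : Type*} [TopologicalSpace X]
    {B : Set (Set X)} (hB : IsTopologicalBasis B) (hW : WeaklyCompletelyRegularFamily B) :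
    CompletelyRegularSpace X :=
  .of_exists_coarser fun x U hU hxU => by
    obtain ⟨V, hVB, hxV, hVU⟩ := hB.exists_subset_of_mem_open hxU hU
    obtain ⟨F, hVF, hFB, hF, hWF⟩ :=
      hW.exists_countable_subfamily (countable_singleton V) (singleton_subset_iff.2 hVB)
    exact ⟨generateFrom F, le_generateFrom fun W hW => hB.isOpen (hFB hW),
      hWF.completelyRegularSpace_generateFrom hF, V, isOpen_generateFrom_of_mem (hVF rfl),
      hxV, hVU⟩

theorem completelyRegular_iff_wcr_base_general {X : Type*} [TopologicalSpace X] :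
    CompletelyRegularSpace X ↔
      ∃ B : Set (Set X), IsTopBase B ∧ WeaklyCompletelyRegularFamily B := by
  simp only [isTopBase_iff_isTopologicalBasis]
  constructor
  · intro _
    exact ⟨_, CompletelyRegularSpace.isTopologicalBasis_isCozeroSet,
      weaklyCompletelyRegularFamily_isCozeroSet⟩
  · rintro ⟨B, hB, hW⟩
    exact hW.completelyRegularSpace hB

/-- A `T₀` space is completely regular iff it has a weakly completely regular
base. -/
theorem completelyRegular_iff_wcr_base {X : Type*} [TopologicalSpace X]
    [T0Space X] :
    CompletelyRegularSpace X ↔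
      ∃ B : Set (Set X), IsTopBase B ∧ WeaklyCompletelyRegularFamily B :=
  completelyRegular_iff_wcr_base_general
end

section
/- If P is a countable, weakly completely regular family of open subsets of a topological space X, then every member of P is a cozero set of X, i.e., for every U ∈ P there is a continuous function f : X → [0,1] with U = f⁻¹((0,1]). -/
/-!
The topology generated by `P` is second countable, and weak complete regularity makes it regular:
a point of a finite intersection `⋂₀ S` of members of `P` lies in some `⋃₀ A n`, an open set
contained in the closed set `(⋃₀ B n)ᶜ ⊆ ⋂₀ S`. By Urysohn's metrization theorem this topology is
pseudometrizable, hence perfectly normal, so its open sets, in particular the members of `P`, are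
cozero sets. Cozero sets stay cozero sets in the finer original topology.
-/

open Set Filter Topology TopologicalSpace

theorem IsCozeroSet.of_le {X : Type*} {t t' : TopologicalSpace X} (h : t ≤ t') {U : Set X}
    (hU : @IsCozeroSet X t' U) : @IsCozeroSet X t U := by
  obtain ⟨f, hf, hf01, rfl⟩ := hU
  exact ⟨f, continuous_le_dom h hf, hf01, rfl⟩

theorem IsOpen.isCozeroSet {X : Type*} [TopologicalSpace X] [PerfectlyNormalSpace X] {U : Set X}
    (hU : IsOpen U) : IsCozeroSet U := by
  obtain ⟨f, hf, hf01⟩ :=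
    perfectlyNormalSpace_iff_forall_isClosed_preimage_zero.1 ‹_› Uᶜ hU.isClosed_compl
  refine ⟨f, f.continuous, hf01, ?_⟩
  ext x
  have hx : x ∉ U ↔ f x = 0 := Set.ext_iff.1 hf x
  simp only [mem_preimage, mem_Ioc, (hf01 x).2, and_true, (hf01 x).1.lt_iff_ne']
  tauto

theorem WeaklyCompletelyRegularFamily.exists_mem_nhds_isClosed_subset_sInter
    {X : Type*} [TopologicalSpace X] {P : Set (Set X)} (hP : WeaklyCompletelyRegularFamily P)
    (hPopen : ∀ U ∈ P, IsOpen U) {S : Set (Set X)} (hSfin : S.Finite) (hSne : S.Nonempty)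
    (hSP : S ⊆ P) {a : X} (ha : a ∈ ⋂₀ S) : ∃ C ∈ 𝓝 a, IsClosed C ∧ C ⊆ ⋂₀ S := by
  obtain ⟨A, B, hA, hB, hSA, hSB, hAB⟩ := hP S hSfin hSne hSP
  obtain ⟨n, hn⟩ := mem_iUnion.1 (hSA ▸ ha)
  have hAopen : IsOpen (⋃₀ A n) := isOpen_sUnion fun V hV => hPopen V ((hA n).1 hV)
  have hBopen : IsOpen (⋃₀ B n) := isOpen_sUnion fun V hV => hPopen V ((hB n).1 hV)
  exact ⟨(⋃₀ B n)ᶜ, mem_of_superset (hAopen.mem_nhds hn) (hAB n), hBopen.isClosed_compl,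
    hSB ▸ subset_iUnion (fun n => (⋃₀ B n)ᶜ) n⟩

theorem WeaklyCompletelyRegularFamily.regularSpace {X : Type*} [t : TopologicalSpace X]
    {P : Set (Set X)} (hP : WeaklyCompletelyRegularFamily P) (ht : t = generateFrom P) :
    RegularSpace X := by
  have hPopen : ∀ U ∈ P, IsOpen U := fun U hU => ht ▸ isOpen_generateFrom_of_mem hU
  refine .of_exists_mem_nhds_isClosed_subset fun a s hs => ?_
  obtain ⟨_, ⟨S, ⟨hSfin, hSP⟩, rfl⟩, haS, hSs⟩ :=
    (isTopologicalBasis_of_subbasis ht).mem_nhds_iff.1 hs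
  rcases S.eq_empty_or_nonempty with rfl | hSne
  · exact ⟨univ, univ_mem, isClosed_univ, by simpa using hSs⟩
  · obtain ⟨C, hC, hCclosed, hCS⟩ :=
      hP.exists_mem_nhds_isClosed_subset_sInter hPopen hSfin hSne hSP haS
    exact ⟨C, hC, hCclosed, hCS.trans hSs⟩

/-- Every member of a countable weakly completely regular family of open sets
is a cozero set. -/
theorem isCozeroSet_of_mem_countable_wcr {X : Type*} [TopologicalSpace X]
    (P : Set (Set X)) (hPopen : ∀ U ∈ P, IsOpen U) (hPcount : P.Countable)
    (hPwcr : WeaklyCompletelyRegularFamily P) :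
    ∀ U ∈ P, IsCozeroSet U := by
  intro U hU
  let _ : TopologicalSpace X := generateFrom P
  have : SecondCountableTopology X := ⟨⟨P, hPcount, rfl⟩⟩
  have : RegularSpace X := hPwcr.regularSpace rfl
  exact IsCozeroSet.of_le (le_generateFrom hPopen) (isOpen_generateFrom_of_mem hU).isCozeroSet
end

section
/- Let X be a compact Hausdorff space, let B be a base of X, and let U₁,…,U_k be cozero subsets of X. Then there exist sequences (A_n)_{n∈ℕ} and (B_n)_{n∈ℕ} of finite subfamilies of B such that U₁ ∩ … ∩ U_k = ⋃_{n∈ℕ} ⋃A_n = ⋃_{n∈ℕ} (X \ ⋃B_n) and ⋃A_n ⊆ X \ ⋃B_n for each n. -/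
open Set

lemma IsCozeroSet.exists_continuous_eq_setOf_pos {X : Type*} [TopologicalSpace X] {U : Set X}
    (hU : IsCozeroSet U) : ∃ f : X → ℝ, Continuous f ∧ U = {x | 0 < f x} := by
  obtain ⟨f, hf, hfI, rfl⟩ := hU
  exact ⟨f, hf, ext fun x => and_iff_left (hfI x).2⟩

lemma exists_continuous_sInter_eq_setOf_pos {X : Type*} [TopologicalSpace X] {S : Set (Set X)}
    (hS : S.Finite) (h : ∀ U ∈ S, ∃ f : X → ℝ, Continuous f ∧ U = {x | 0 < f x}) :
    ∃ f : X → ℝ, Continuous f ∧ ⋂₀ S = {x | 0 < f x} := by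
  induction S, hS using Set.Finite.induction_on with
  | empty => exact ⟨fun _ => 1, continuous_const, by simp⟩
  | @insert U S _ _ ih =>
    obtain ⟨f, hf, hU⟩ := h U (mem_insert U S)
    obtain ⟨g, hg, hS⟩ := ih fun V hV => h V (mem_insert_of_mem U hV)
    refine ⟨fun x => min (f x) (g x), hf.min hg, ?_⟩
    rw [sInter_insert, hU, hS]
    ext x
    simp only [mem_inter_iff, mem_ofPred_eq, lt_min_iff]

lemma IsTopBase.exists_finite_subset_sUnion {X : Type*} [TopologicalSpace X] {B : Set (Set X)}
    (hB : IsTopBase B) {K U : Set X} (hK : IsCompact K) (hU : IsOpen U) (hKU : K ⊆ U) :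
    ∃ A ⊆ B, A.Finite ∧ K ⊆ ⋃₀ A ∧ ⋃₀ A ⊆ U := by
  obtain ⟨S, hSB, rfl⟩ := hB.2 U hU
  rw [sUnion_eq_biUnion] at hKU
  obtain ⟨A, hAS, hAfin, hKA⟩ := hK.elim_finite_subcover_image (fun V hV => hB.1 V (hSB hV)) hKU
  exact ⟨A, hAS.trans hSB, hAfin, sUnion_eq_biUnion ▸ hKA, sUnion_subset_sUnion hAS⟩

lemma iUnion_eq_setOf_pos_of_sandwich {X : Type*} {f : X → ℝ} {P : ℕ → Set X}
    (hlow : ∀ n : ℕ, {x | 1 / ((n : ℝ) + 1) ≤ f x} ⊆ P n)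
    (hup : ∀ n, P n ⊆ {x | 0 < f x}) :
    ⋃ n, P n = {x | 0 < f x} := by
  refine (iUnion_subset hup).antisymm fun x hx => ?_
  obtain ⟨n, hn⟩ := exists_nat_one_div_lt (mem_ofPred_eq ▸ hx)
  exact mem_iUnion.2 ⟨n, hlow n hn.le⟩

theorem cozero_intersection_decomposition_general {X : Type*} [TopologicalSpace X]
    [CompactSpace X] (B : Set (Set X)) (hB : IsTopBase B)
    (S : Set (Set X)) (hSfin : S.Finite)
    (hScoz : ∀ U ∈ S, IsCozeroSet U) :
    ∃ A C : ℕ → Set (Set X),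
      (∀ n, A n ⊆ B ∧ (A n).Finite) ∧ (∀ n, C n ⊆ B ∧ (C n).Finite) ∧
      ⋂₀ S = ⋃ n, ⋃₀ A n ∧ ⋂₀ S = ⋃ n, (⋃₀ C n)ᶜ ∧
      ∀ n, ⋃₀ A n ⊆ (⋃₀ C n)ᶜ := by
  obtain ⟨f, hf, hS⟩ := exists_continuous_sInter_eq_setOf_pos hSfin fun U hU =>
    (hScoz U hU).exists_continuous_eq_setOf_pos
  have hpos (n : ℕ) : (0 : ℝ) < 1 / ((n : ℝ) + 2) := by positivity
  have hlt (n : ℕ) : 1 / ((n : ℝ) + 2) < 1 / ((n : ℝ) + 1) :=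
    one_div_lt_one_div_of_lt (by positivity) (by linarith)
  choose A hAB hAfin hKA hAU using fun n : ℕ =>
    hB.exists_finite_subset_sUnion (isClosed_le continuous_const hf).isCompact
      (isOpen_lt continuous_const hf)
      fun x (hx : 1 / ((n : ℝ) + 1) ≤ f x) => (hlt n).trans_le hx
  choose C hCB hCfin hKC hCU using fun n : ℕ =>
    hB.exists_finite_subset_sUnion (isClosed_le hf continuous_const).isCompact
      (isOpen_lt hf continuous_const) fun x (hx : f x ≤ 0) => hx.trans_lt (hpos n)
  have hA_up (n : ℕ) : ⋃₀ A n ⊆ {x | 0 < f x} := fun x hx => (hpos n).trans (hAU n hx)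
  have hC_low (n : ℕ) : {x | 1 / ((n : ℝ) + 1) ≤ f x} ⊆ (⋃₀ C n)ᶜ := fun x hx hxC =>
    (hlt n).not_ge (hx.trans (hCU n hxC).le)
  have hC_up (n : ℕ) : (⋃₀ C n)ᶜ ⊆ {x | 0 < f x} := fun x hx =>
    show 0 < f x from not_le.1 fun h => hx (hKC n h)
  refine ⟨A, C, fun n => ⟨hAB n, hAfin n⟩, fun n => ⟨hCB n, hCfin n⟩,
    hS.trans (iUnion_eq_setOf_pos_of_sandwich hKA hA_up).symm,
    hS.trans (iUnion_eq_setOf_pos_of_sandwich hC_low hC_up).symm,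
    fun n x hxA hxC => lt_asymm (α := ℝ) (hAU n hxA) (hCU n hxC)⟩

/-- In a compact Hausdorff space, any finite intersection of cozero sets admits
a decomposition as in the definition of weak complete regularity, with the
finite subfamilies taken from any given base. -/
theorem cozero_intersection_decomposition {X : Type*} [TopologicalSpace X]
    [CompactSpace X] [T2Space X] (B : Set (Set X)) (hB : IsTopBase B)
    (S : Set (Set X)) (hSfin : S.Finite) (hSne : S.Nonempty)
    (hScoz : ∀ U ∈ S, IsCozeroSet U) :
    ∃ A C : ℕ → Set (Set X),
      (∀ n, A n ⊆ B ∧ (A n).Finite) ∧ (∀ n, C n ⊆ B ∧ (C n).Finite) ∧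
      ⋂₀ S = ⋃ n, ⋃₀ A n ∧ ⋂₀ S = ⋃ n, (⋃₀ C n)ᶜ ∧
      ∀ n, ⋃₀ A n ⊆ (⋃₀ C n)ᶜ :=
  cozero_intersection_decomposition_general B hB S hSfin hScoz
end

section
/- Let X be a compact Hausdorff space, let B be a base of X consisting of cozero sets with the FNS property witnessed by s, and let P ⊆ B be a countable, weakly completely regular family such that s(V) ⊆ P for all V ∈ P. Then the quotient map q_P : X → X/P is a continuous open surjection onto a compact metrizable space. -/
open Set

theorem IsTopBase.exists_mem_subset {X : Type*} [TopologicalSpace X] {B : Set (Set X)}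
    (hB : IsTopBase B) {O : Set X} (hO : IsOpen O) {x : X} (hx : x ∈ O) :
    ∃ U ∈ B, x ∈ U ∧ U ⊆ O := by
  obtain ⟨S, hSB, rfl⟩ := hB.2 O hO
  obtain ⟨U, hUS, hxU⟩ := hx
  exact ⟨U, hSB hUS, hxU, subset_sUnion_of_mem hUS⟩

namespace WeaklyCompletelyRegularFamily

variable {X : Type*} {P : Set (Set X)}

theorem exists_mem_subset_sInter (hP : WeaklyCompletelyRegularFamily P) {S : Set (Set X)}
    (hSf : S.Finite) (hSne : S.Nonempty) (hSP : S ⊆ P) {x : X} (hx : x ∈ ⋂₀ S) :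
    ∃ U ∈ P, x ∈ U ∧ U ⊆ ⋂₀ S ∧ ∀ y ∉ ⋂₀ S, ∃ W ∈ P, y ∈ W ∧ Disjoint U W := by
  obtain ⟨A, C, hA, hC, hSA, hSC, hAC⟩ := hP S hSf hSne hSP
  rw [hSA] at hx
  obtain ⟨n, U, hUA, hxU⟩ := mem_iUnion.1 hx
  have hUC : U ⊆ (⋃₀ C n)ᶜ := (subset_sUnion_of_mem hUA).trans (hAC n)
  have hUS : U ⊆ ⋂₀ S := hUC.trans (hSC ▸ subset_iUnion (fun m ↦ (⋃₀ C m)ᶜ) n)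
  refine ⟨U, (hA n).1 hUA, hxU, hUS, fun y hy ↦ ?_⟩
  have hyC : y ∈ ⋃₀ C n := by
    by_contra hyC
    exact hy (hSC ▸ mem_iUnion.2 ⟨n, hyC⟩)
  obtain ⟨W, hWC, hyW⟩ := hyC
  exact ⟨W, (hC n).1 hWC, hyW, disjoint_left.2 fun z hzU hzW ↦ hUC hzU ⟨W, hWC, hzW⟩⟩

theorem exists_disjoint_of_mem_of_notMem (hP : WeaklyCompletelyRegularFamily P) {V : Set X}
    (hV : V ∈ P) {x y : X} (hx : x ∈ V) (hy : y ∉ V) :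
    ∃ U ∈ P, ∃ W ∈ P, x ∈ U ∧ y ∈ W ∧ Disjoint U W := by
  obtain ⟨U, hUP, hxU, -, hsep⟩ := hP.exists_mem_subset_sInter (finite_singleton V)
    (singleton_nonempty V) (singleton_subset_iff.2 hV) (by rwa [sInter_singleton])
  obtain ⟨W, hWP, hyW, hUW⟩ := hsep y (by rwa [sInter_singleton])
  exact ⟨U, hUP, W, hWP, hxU, hyW, hUW⟩

theorem exists_disjoint_of_not_famSetoid (hP : WeaklyCompletelyRegularFamily P) {x y : X}
    (hxy : ¬ famSetoid P x y) : ∃ U ∈ P, ∃ W ∈ P, x ∈ U ∧ y ∈ W ∧ Disjoint U W := by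
  obtain ⟨V, hV, hxy⟩ : ∃ V ∈ P, ¬(x ∈ V ↔ y ∈ V) := by
    by_contra! h
    exact hxy h
  by_cases hx : x ∈ V
  · exact hP.exists_disjoint_of_mem_of_notMem hV hx (by tauto)
  · obtain ⟨W, hW, U, hU, hyW, hxU, hWU⟩ :=
      hP.exists_disjoint_of_mem_of_notMem hV (x := y) (by tauto) hx
    exact ⟨U, hU, W, hW, hxU, hyW, hWU.symm⟩

theorem exists_mem_disjoint_of_isCompact [TopologicalSpace X]
    (hP : WeaklyCompletelyRegularFamily P) (hPo : ∀ V ∈ P, IsOpen V) {C : Set X}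
    (hC : IsCompact C) (hCne : C.Nonempty) {w : X} (hw : ∀ v ∈ C, ¬ famSetoid P v w) :
    ∃ A ∈ P, w ∈ A ∧ Disjoint A C := by
  choose! U hUP W hWP hvU hwW hUW using
    fun v hv ↦ hP.exists_disjoint_of_not_famSetoid (hw v hv)
  obtain ⟨t, htC, hCt⟩ :=
    hC.elim_nhds_subcover U fun v hv ↦ (hPo _ (hUP v hv)).mem_nhds (hvU v hv)
  have htne : t.Nonempty := by
    obtain ⟨c, hc⟩ := hCne
    obtain ⟨v, hv, -⟩ := mem_iUnion₂.1 (hCt hc)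
    exact ⟨v, hv⟩
  obtain ⟨A, hAP, hwA, hAW, -⟩ := hP.exists_mem_subset_sInter (t.finite_toSet.image W)
    ((Finset.coe_nonempty.2 htne).image W) (image_subset_iff.2 fun v hv ↦ hWP v (htC v hv))
    (forall_mem_image.2 fun v hv ↦ hwW v (htC v hv))
  refine ⟨A, hAP, hwA, disjoint_right.2 fun c hc hcA ↦ ?_⟩
  obtain ⟨v, hv, hcU⟩ := mem_iUnion₂.1 (hCt hc)
  exact disjoint_right.1 (hUW v (htC v hv)) (hAW hcA _ (mem_image_of_mem W hv)) hcU

end WeaklyCompletelyRegularFamily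

section FamQuotient

variable {X : Type*} {P : Set (Set X)}

theorem famSetoid_preimage_image_sInter {F : Set (Set X)} (hF : F ⊆ P) :
    Quotient.mk (famSetoid P) ⁻¹' (Quotient.mk (famSetoid P) '' ⋂₀ F) = ⋂₀ F := by
  refine (subset_preimage_image _ _).antisymm' ?_
  rintro x ⟨y, hyF, hyx⟩ V hV
  exact (Quotient.exact hyx V (hF hV)).1 (hyF V hV)

theorem exists_finite_sInter_subset_preimage_image [TopologicalSpace X] [CompactSpace X]
    [RegularSpace X] {B : Set (Set X)} {s : Set X → Set (Set X)} (hB : IsTopBase B)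
    (hs : FNSWitness B s) (hPB : P ⊆ B) (hP : WeaklyCompletelyRegularFamily P)
    (hPs : ∀ V ∈ P, s V ⊆ P) {G : Set X} (hG : IsOpen G) {y : X} (hy : y ∈ G) :
    ∃ F ⊆ P, F.Finite ∧ y ∈ ⋂₀ F ∧
      ⋂₀ F ⊆ Quotient.mk (famSetoid P) ⁻¹' (Quotient.mk (famSetoid P) '' G) := by
  obtain ⟨K, hK, hKc, hKG⟩ := exists_mem_nhds_isClosed_subset (hG.mem_nhds hy)
  obtain ⟨U, hUB, hyU, hUK⟩ :=
    hB.exists_mem_subset isOpen_interior (mem_interior_iff_mem_nhds.2 hK)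
  have hUG : closure U ⊆ G :=
    (closure_minimal (hUK.trans interior_subset) hKc).trans hKG
  refine ⟨{W ∈ s U | W ∈ P ∧ U ⊆ W}, fun W hW ↦ hW.2.1,
    (hs.1 U hUB).2.subset fun W hW ↦ hW.1, fun W hW ↦ hW.2.2 hyU, fun w hw ↦ ?_⟩
  by_contra hwG
  have hwU : ∀ v ∈ closure U, ¬ famSetoid P v w :=
    fun v hv hvw ↦ hwG ⟨v, hUG hv, Quotient.sound hvw⟩
  obtain ⟨A, hAP, hwA, hAU⟩ := hP.exists_mem_disjoint_of_isCompact
    (fun V hV ↦ hB.1 V (hPB hV)) isClosed_closure.isCompact ⟨y, subset_closure hyU⟩ hwU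
  obtain ⟨W₁, hW₁, W₂, -, hW₁₂, hUW₁, hAW₂⟩ :=
    hs.2 U hUB A (hPB hAP) (hAU.symm.mono_left subset_closure)
  exact disjoint_left.1 hW₁₂ (hw W₁ ⟨hW₁.1, hPs A hAP hW₁.2, hUW₁⟩) (hAW₂ hwA)

variable [TopologicalSpace X]

theorem isOpenMap_famSetoid_mk (hPo : ∀ V ∈ P, IsOpen V)
    (hsat : ∀ G : Set X, IsOpen G → ∀ y ∈ G, ∃ F ⊆ P, F.Finite ∧ y ∈ ⋂₀ F ∧
      ⋂₀ F ⊆ Quotient.mk (famSetoid P) ⁻¹' (Quotient.mk (famSetoid P) '' G)) :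
    IsOpenMap (Quotient.mk (famSetoid P)) := by
  intro G hG
  rw [← isQuotientMap_quotient_mk'.isOpen_preimage]
  refine isOpen_iff_forall_mem_open.2 fun x ⟨y, hyG, hyx⟩ ↦ ?_
  obtain ⟨F, hFP, hFf, hyF, hFG⟩ := hsat G hG y hyG
  refine ⟨⋂₀ F, hFG, hFf.isOpen_sInter fun V hV ↦ hPo V (hFP hV), ?_⟩
  rw [← famSetoid_preimage_image_sInter hFP]
  exact ⟨y, hyF, hyx⟩

theorem isTopologicalBasis_famSetoid_image_sInter
    (hmk : IsOpenMap (Quotient.mk (famSetoid P))) (hPo : ∀ V ∈ P, IsOpen V)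
    (hsat : ∀ G : Set X, IsOpen G → ∀ y ∈ G, ∃ F ⊆ P, F.Finite ∧ y ∈ ⋂₀ F ∧
      ⋂₀ F ⊆ Quotient.mk (famSetoid P) ⁻¹' (Quotient.mk (famSetoid P) '' G)) :
    TopologicalSpace.IsTopologicalBasis
      ((fun F ↦ Quotient.mk (famSetoid P) '' ⋂₀ F) '' {F | F.Finite ∧ F ⊆ P}) := by
  refine TopologicalSpace.isTopologicalBasis_of_isOpen_of_nhds ?_ ?_
  · rintro _ ⟨F, ⟨hFf, hFP⟩, rfl⟩
    exact hmk _ (hFf.isOpen_sInter fun V hV ↦ hPo V (hFP hV))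
  · rintro ζ T hζT hT
    obtain ⟨x, rfl⟩ := Quotient.mk_surjective ζ
    obtain ⟨F, hFP, hFf, hxF, hFT⟩ :=
      hsat (Quotient.mk (famSetoid P) ⁻¹' T) (hT.preimage continuous_quotient_mk') x hζT
    refine ⟨_, ⟨F, ⟨hFf, hFP⟩, rfl⟩, mem_image_of_mem _ hxF, ?_⟩
    rw [image_subset_iff]
    simpa only [image_preimage_eq T Quotient.mk_surjective] using hFT

theorem t2Space_famSetoid (hP : WeaklyCompletelyRegularFamily P)
    (hmk : IsOpenMap (Quotient.mk (famSetoid P))) (hPo : ∀ V ∈ P, IsOpen V) :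
    T2Space (Quotient (famSetoid P)) := by
  refine ⟨Quotient.ind₂ fun x y hxy ↦ ?_⟩
  obtain ⟨U, hUP, W, hWP, hxU, hyW, hUW⟩ :=
    hP.exists_disjoint_of_not_famSetoid fun h ↦ hxy (Quotient.sound h)
  refine ⟨_, _, hmk U (hPo U hUP), hmk W (hPo W hWP), mem_image_of_mem _ hxU,
    mem_image_of_mem _ hyW, disjoint_left.2 ?_⟩
  rintro _ ⟨u, huU, rfl⟩ ⟨w, hwW, hwu⟩
  exact disjoint_left.1 hUW ((Quotient.exact hwu U hUP).2 huU) hwW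

end FamQuotient

theorem quotient_map_open_onto_compact_metrizable_general {X : Type*}
    [TopologicalSpace X] [CompactSpace X] [T2Space X]
    (B : Set (Set X)) (hB : IsTopBase B)
    (s : Set X → Set (Set X)) (hs : FNSWitness B s)
    (P : Set (Set X)) (hPB : P ⊆ B) (hPcount : P.Countable)
    (hPwcr : WeaklyCompletelyRegularFamily P) (hPs : ∀ V ∈ P, s V ⊆ P) :
    Continuous (Quotient.mk (famSetoid P)) ∧
    IsOpenMap (Quotient.mk (famSetoid P)) ∧
    Function.Surjective (Quotient.mk (famSetoid P)) ∧
    CompactSpace (Quotient (famSetoid P)) ∧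
    TopologicalSpace.MetrizableSpace (Quotient (famSetoid P)) := by
  have hPo : ∀ V ∈ P, IsOpen V := fun V hV ↦ hB.1 V (hPB hV)
  have hsat := fun G (hG : IsOpen G) y (hy : y ∈ G) ↦
    exists_finite_sInter_subset_preimage_image hB hs hPB hPwcr hPs hG hy
  have hmk := isOpenMap_famSetoid_mk hPo hsat
  have := t2Space_famSetoid hPwcr hmk hPo
  have := (isTopologicalBasis_famSetoid_image_sInter hmk hPo hsat).secondCountableTopology
    ((countable_ofPred_finite_subset hPcount).image _)
  exact ⟨continuous_quotient_mk', hmk, Quotient.mk_surjective, inferInstance, inferInstance⟩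

/-- If `B` is a base of cozero sets of a compact Hausdorff space with FNS
witness `s`, and `P ⊆ B` is countable, weakly completely regular and closed
under `s`, then the quotient map `q_P : X → X/P` is a continuous open
surjection onto a compact metrizable space. -/
theorem quotient_map_open_onto_compact_metrizable {X : Type*}
    [TopologicalSpace X] [CompactSpace X] [T2Space X]
    (B : Set (Set X)) (hB : IsTopBase B) (hBcoz : ∀ U ∈ B, IsCozeroSet U)
    (s : Set X → Set (Set X)) (hs : FNSWitness B s)
    (P : Set (Set X)) (hPB : P ⊆ B) (hPcount : P.Countable)
    (hPwcr : WeaklyCompletelyRegularFamily P) (hPs : ∀ V ∈ P, s V ⊆ P) :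
    Continuous (Quotient.mk (famSetoid P)) ∧
    IsOpenMap (Quotient.mk (famSetoid P)) ∧
    Function.Surjective (Quotient.mk (famSetoid P)) ∧
    CompactSpace (Quotient (famSetoid P)) ∧
    TopologicalSpace.MetrizableSpace (Quotient (famSetoid P)) :=
  quotient_map_open_onto_compact_metrizable_general B hB s hs P hPB hPcount hPwcr hPs
end

section
/- If X is an infinite regular Hausdorff (T3) topological space, then the family RO(X) of all regular open subsets of X does not have the FNS property. -/
/-!
Let `s` witness FNS for `B`, and let `U₀, U₁, …` be nonempty members of `B` that are
independent: for every `S ⊆ ℕ` some `D_S ∈ B` misses the `Uₙ` with `n ∈ S` and contains the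
others. The members of `s D_S` that lie in the countable family `⋃ₙ s Uₙ` and miss `D_S` form a
finite set, and `n ∈ S` iff one of them contains `Uₙ`. This injects `𝒫(ℕ)` into the finite
subsets of a countable set, which is impossible. In an infinite T₃ space the sets
`int cl (⋃_{n ∈ S} Vₙ)`, for pairwise disjoint nonempty open `Vₙ`, supply such an independent
family of regular open sets.
-/

open Set Function

theorem not_hasFNS_of_independent {X : Type*} {B : Set (Set X)} (U : ℕ → Set X)
    (D : Set ℕ → Set X) (hU : ∀ n, U n ∈ B) (hU_ne : ∀ n, (U n).Nonempty) (hD : ∀ S, D S ∈ B)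
    (hdisj : ∀ S, ∀ n ∈ S, Disjoint (U n) (D S)) (hsub : ∀ S, ∀ n ∉ S, U n ⊆ D S) :
    ¬ HasFNS B := by
  rintro ⟨s, hs_fin, hs_sep⟩
  set M := ⋃ n, s (U n)
  have hM : M.Countable := countable_iUnion fun n => (hs_fin _ (hU n)).2.countable
  set Φ : Set ℕ → Set (Set X) := fun S => {W | W ∈ s (D S) ∧ W ∈ M ∧ Disjoint W (D S)}
  have hΦ_maps : MapsTo Φ univ {t | t.Finite ∧ t ⊆ M} := fun S _ =>
    ⟨(hs_fin _ (hD S)).2.subset fun W hW => hW.1, fun W hW => hW.2.1⟩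
  have hΦ_decode : ∀ S, S = {n | ∃ W ∈ Φ S, U n ⊆ W} := by
    intro S
    ext n
    refine ⟨fun hn => ?_, fun ⟨W, hW, hUW⟩ => ?_⟩
    · obtain ⟨WU, hWU, WD, -, hWUD, hUWU, hDWD⟩ := hs_sep _ (hU n) _ (hD S) (hdisj S n hn)
      exact ⟨WU, ⟨hWU.2, mem_iUnion_of_mem n hWU.1, hWUD.mono_right hDWD⟩, hUWU⟩
    · by_contra hn
      obtain ⟨x, hx⟩ := hU_ne n
      exact hW.2.2.ne_of_mem (hUW hx) (hsub S n hn hx) rfl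
  have hΦ_inj : InjOn Φ univ := fun S _ T _ h => by rw [hΦ_decode S, hΦ_decode T, h]
  have : Countable (Set ℕ) := countable_univ_iff.mp <|
    hΦ_maps.countable_of_injOn hΦ_inj (countable_ofPred_finite_subset hM)
  obtain ⟨f, hf⟩ := exists_injective_nat (Set ℕ)
  exact cantor_injective f hf

section Topology

variable {X : Type*} [TopologicalSpace X]

theorem IsOpen.exists_nonempty_open_disjoint_infinite_open [T25Space X] {O : Set X}
    (hO : IsOpen O) (hO_inf : O.Infinite) :
    ∃ U O' : Set X, IsOpen U ∧ U.Nonempty ∧ U ⊆ O ∧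
      IsOpen O' ∧ O'.Infinite ∧ O' ⊆ O ∧ Disjoint U O' := by
  have split : ∀ x ∈ O, ∀ u : Set X, x ∈ u → IsOpen u → (O \ closure u).Infinite →
      ∃ U O' : Set X, IsOpen U ∧ U.Nonempty ∧ U ⊆ O ∧
        IsOpen O' ∧ O'.Infinite ∧ O' ⊆ O ∧ Disjoint U O' := fun x hx u hxu hu hinf =>
    ⟨O ∩ u, O \ closure u, hO.inter hu, ⟨x, hx, hxu⟩, inter_subset_left,
      hO.sdiff isClosed_closure, hinf, sdiff_subset,
      disjoint_sdiff_right.mono_left (inter_subset_right.trans subset_closure)⟩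
  obtain ⟨x, hx, y, hy, hxy⟩ := hO_inf.nontrivial
  obtain ⟨u, hxu, hu, v, hyv, hv, huv⟩ := exists_open_nhds_disjoint_closure hxy
  have hO_cover : O ⊆ (O \ closure u) ∪ (O \ closure v) := fun z hz =>
    (em (z ∈ closure u)).elim (fun hzu => .inr ⟨hz, huv.notMem_of_mem_left hzu⟩)
      fun hzu => .inl ⟨hz, hzu⟩
  rcases infinite_union.mp (hO_inf.mono hO_cover) with h | h
  · exact split x hx u hxu hu h
  · exact split y hy v hyv hv h

theorem exists_pairwise_disjoint_nonempty_open [T25Space X] [Infinite X] :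
    ∃ V : ℕ → Set X, (∀ n, IsOpen (V n)) ∧ (∀ n, (V n).Nonempty) ∧ Pairwise (Disjoint on V) := by
  choose! U next hU_open hU_ne hU_sub hnext_open hnext_inf hnext_sub hU_disj using
    fun (O : Set X) (h : IsOpen O ∧ O.Infinite) =>
      h.1.exists_nonempty_open_disjoint_infinite_open h.2
  set O : ℕ → Set X := fun n => next^[n] univ
  have hO_succ : ∀ n, O (n + 1) = next (O n) := fun n => iterate_succ_apply' next n univ
  have hO : ∀ n, IsOpen (O n) ∧ (O n).Infinite := by
    intro n
    induction n with
    | zero => exact ⟨isOpen_univ, infinite_univ⟩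
    | succ n ih => rw [hO_succ]; exact ⟨hnext_open _ ih, hnext_inf _ ih⟩
  have hO_anti : Antitone O := antitone_nat_of_succ_le fun n => by
    rw [hO_succ]; exact hnext_sub _ (hO n)
  refine ⟨fun n => U (O n), fun n => hU_open _ (hO n), fun n => hU_ne _ (hO n),
    (pairwise_disjoint_on _).mpr fun m n hmn => ?_⟩
  have hn : U (O n) ⊆ next (O m) := (hU_sub _ (hO n)).trans (hO_succ m ▸ hO_anti hmn)
  exact (hU_disj _ (hO m)).mono_right hn

theorem Disjoint.interior_closure {A B : Set X} (h : Disjoint A B) (hA : IsOpen A) :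
    Disjoint (interior (closure A)) (interior (closure B)) :=
  ((h.closure_right hA).mono_right interior_subset).closure_left isOpen_interior
    |>.mono_left interior_subset

theorem Pairwise.disjoint_interior_closure_biUnion {ι : Type*} {V : ι → Set X}
    (hV : Pairwise (Disjoint on V)) (hV_open : ∀ i, IsOpen (V i)) {S T : Set ι}
    (hST : Disjoint S T) :
    Disjoint (interior (closure (⋃ i ∈ S, V i))) (interior (closure (⋃ i ∈ T, V i))) := by
  refine Disjoint.interior_closure ?_ (isOpen_biUnion fun i _ => hV_open i)
  exact disjoint_iUnion₂_left.mpr fun i hi => disjoint_iUnion₂_right.mpr fun j hj =>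
    hV (hST.ne_of_mem hi hj)

end Topology

/-- In an infinite regular Hausdorff space, the family of all regular open sets
does not have the FNS property. -/
theorem regularOpen_not_hasFNS {X : Type*} [TopologicalSpace X] [T3Space X]
    [Infinite X] :
    ¬ HasFNS {U : Set X | U = interior (closure U)} := by
  obtain ⟨V, hV_open, hV_ne, hV_disj⟩ := exists_pairwise_disjoint_nonempty_open (X := X)
  set R : Set ℕ → Set X := fun S => interior (closure (⋃ n ∈ S, V n))
  have hR_mono : Monotone R := fun S T hST =>
    interior_mono (closure_mono (biUnion_subset_biUnion_left hST))
  have hV_R : ∀ n, V n ⊆ R {n} := fun n => by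
    simpa [R] using (hV_open n).subset_interior_closure
  refine not_hasFNS_of_independent (fun n => R {n}) (fun S => R Sᶜ)
    (fun _ => interior_closure_idem.symm) (fun n => (hV_ne n).mono (hV_R n))
    (fun _ => interior_closure_idem.symm) (fun S n hn => ?_) (fun S n hn => ?_)
  · exact hV_disj.disjoint_interior_closure_biUnion hV_open
      (disjoint_singleton_left.mpr fun h => h hn)
  · exact hR_mono (singleton_subset_iff.mpr hn)
end

section
/- If X is an infinite regular Hausdorff (T3) topological space, then the topology of X (the family of all open subsets of X) does not have the FNS property. -/
/-!
An infinite Hausdorff space carries a sequence of nonempty pairwise disjoint open sets `C n`; write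
`C[S] = ⋃ n ∈ S, C n`. Given an FNS assignment `s` and `D ⊆ ℕ`, separate each `C[D ∩ [0, k]]` from
`C[Dᶜ]` inside `s (C[Dᶜ])`. As that family is finite, one separator `W` serves infinitely many `k`,
so `W ⊇ C[D]`, `W` misses `C[Dᶜ]`, and `W` lies in `s (C[F])` for a finite `F`. Then `D` can be
read off `W`, which makes `Set ℕ` inject into the countable family `⋃ F finite, s (C[F])`.
-/

open Set Function

namespace FNSWitness

variable {X : Type*} {B : Set (Set X)} {s : Set X → Set (Set X)}

lemma exists_mem_subset_disjoint (hs : FNSWitness B s) {U V : Set X} (hU : U ∈ B) (hV : V ∈ B)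
    (hUV : Disjoint U V) : ∃ W ∈ s U ∩ s V, U ⊆ W ∧ Disjoint W V := by
  obtain ⟨WU, hWU, WV, -, hW, hUWU, hVWV⟩ := hs.2 U hU V hV hUV
  exact ⟨WU, hWU, hUWU, hW.mono_right hVWV⟩

lemma exists_mem_iUnion_subset_disjoint (hs : FNSWitness B s) {U : ℕ → Set X}
    (hmono : Monotone U) (hU : ∀ k, U k ∈ B) {V : Set X} (hV : V ∈ B)
    (hUV : ∀ k, Disjoint (U k) V) : ∃ k, ∃ W ∈ s (U k), ⋃ k, U k ⊆ W ∧ Disjoint W V := by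
  choose W hW hUW hWV using fun k => hs.exists_mem_subset_disjoint (hU k) hV (hUV k)
  have : Finite (s V) := (hs.1 V hV).2
  obtain ⟨w, hw⟩ := Finite.exists_infinite_fiber fun k => (⟨W k, (hW k).2⟩ : s V)
  have hfiber : {k | W k = w}.Infinite := by
    refine (infinite_coe_iff.1 hw).mono fun k hk => ?_
    exact congrArg Subtype.val (mem_singleton_iff.1 hk)
  obtain ⟨k₀, hk₀⟩ := hfiber.nonempty
  refine ⟨k₀, W k₀, (hW k₀).1, iUnion_subset fun n => ?_, hWV k₀⟩
  obtain ⟨k, hk, hnk⟩ := hfiber.exists_gt n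
  calc U n ⊆ U k := hmono hnk.le
    _ ⊆ W k₀ := (hUW k).trans_eq (hk.trans hk₀.symm)

lemma exists_finset_setOf_subset_eq (hs : FNSWitness B s) {C : ℕ → Set X}
    (hne : ∀ n, (C n).Nonempty) (hd : Pairwise (Disjoint on C))
    (hB : ∀ S : Set ℕ, ⋃ n ∈ S, C n ∈ B) (D : Set ℕ) :
    ∃ F : Finset ℕ, ∃ W ∈ s (⋃ n ∈ F, C n), {n | C n ⊆ W} = D := by
  obtain ⟨k, W, hW, hDW, hWD⟩ := hs.exists_mem_iUnion_subset_disjoint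
    (U := fun k => ⋃ n ∈ D ∩ Iic k, C n)
    (fun k l hkl => biUnion_mono (inter_subset_inter_right D (Iic_subset_Iic.2 hkl))
      fun _ _ => subset_rfl)
    (fun k => hB _) (hB Dᶜ)
    (fun k => disjoint_iUnion₂_left.2 fun n hn => disjoint_iUnion₂_right.2 fun m hm =>
      hd (ne_of_mem_of_not_mem hn.1 hm))
  refine ⟨((finite_Iic k).inter_of_right D).toFinset, W, by simpa using hW, ?_⟩
  ext n
  refine ⟨fun hn => by_contra fun hnD => (hne n).ne_empty ?_, fun hn x hx => ?_⟩
  · exact (hWD.mono_right (subset_biUnion_of_mem (u := C) hnD)).symm.eq_bot_of_le hn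
  · exact hDW (mem_iUnion.2 ⟨n, mem_biUnion ⟨hn, mem_Iic.2 le_rfl⟩ hx⟩)

end FNSWitness

theorem not_hasFNS_of_pairwise_disjoint {X : Type*} {B : Set (Set X)} {C : ℕ → Set X}
    (hne : ∀ n, (C n).Nonempty) (hd : Pairwise (Disjoint on C))
    (hB : ∀ S : Set ℕ, ⋃ n ∈ S, C n ∈ B) : ¬ HasFNS B := by
  rintro ⟨s, hs⟩
  choose F W hW hWD using hs.exists_finset_setOf_subset_eq hne hd hB
  have hcount : (⋃ F : Finset ℕ, s (⋃ n ∈ F, C n)).Countable :=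
    countable_iUnion fun F => (hs.1 _ (hB _)).2.countable
  have := hcount.to_subtype
  obtain ⟨f, hf⟩ := Countable.exists_injective_nat (⋃ F : Finset ℕ, s (⋃ n ∈ F, C n))
  refine cantor_injective (fun D => f ⟨W D, mem_iUnion.2 ⟨F D, hW D⟩⟩) fun D D' h => ?_
  have hWW : W D = W D' := congrArg Subtype.val (hf h)
  rw [← hWD D, ← hWD D', hWW]

/-- In an infinite regular Hausdorff space, the topology does not have the FNS
property. -/
theorem topology_not_hasFNS {X : Type*} [TopologicalSpace X] [T3Space X]
    [Infinite X] :
    ¬ HasFNS {U : Set X | IsOpen U} := by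
  obtain ⟨C, hinf, hopen, hd⟩ := exists_seq_infinite_isOpen_pairwise_disjoint X
  exact not_hasFNS_of_pairwise_disjoint (fun n => (hinf n).nonempty) hd
    fun S => isOpen_biUnion fun n _ => hopen n
end

section
/- If X is an infinite regular Hausdorff (T3) topological space, then the topology of X (the family of all open subsets of X) does not have the FN property. -/
/-!
An infinite Hausdorff space carries infinitely many pairwise disjoint nonempty open sets; indexing
them by `ℚ` and taking, for each real `r`, the union `V r` of those indexed below `r` gives a
strictly increasing `ℝ`-indexed family of open sets. No FN witness `(u, l)` survives such a
family: for each `r`, the finite set `u (V r)` meets `l (V q)` for every rational `q > r`, so a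
single `U r ∈ u (V r)` lies in `l (V q)` for rationals `q` arbitrarily close to `r` from above.
Then `V r ⊆ U r ⊆ V q`, which forces `r ↦ U r` to be injective, while all the `U r` lie in the
countable family `⋃ q : ℚ, l (V q)`.
-/

open Set Filter Function Topology

lemma Rat.comap_cast_nhdsGT_neBot (r : ℝ) : (comap ((↑) : ℚ → ℝ) (𝓝[>] r)).NeBot := by
  refine comap_neBot fun t ht => ?_
  obtain ⟨b, hrb, hbt⟩ := mem_nhdsGT_iff_exists_Ioo_subset.1 ht
  obtain ⟨q, hrq, hqb⟩ := exists_rat_btwn (mem_Ioi.1 hrb)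
  exact ⟨q, hbt ⟨hrq, hqb⟩⟩

lemma strictMono_iUnion_rat_lt {X : Type*} {G : ℚ → Set X} (hne : ∀ q, (G q).Nonempty)
    (hd : Pairwise (Disjoint on G)) :
    StrictMono fun r : ℝ => ⋃ (q : ℚ) (_ : (q : ℝ) < r), G q := by
  intro r s hrs
  obtain ⟨p, hrp, hps⟩ := exists_rat_btwn hrs
  have hsub : (⋃ (q : ℚ) (_ : (q : ℝ) < r), G q) ⊆ ⋃ (q : ℚ) (_ : (q : ℝ) < s), G q :=
    iUnion₂_mono' fun q hq => ⟨q, hq.trans hrs, subset_rfl⟩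
  obtain ⟨x, hx⟩ := hne p
  refine (ssubset_iff_of_subset hsub).2 ⟨x, mem_iUnion₂.2 ⟨p, hps, hx⟩, ?_⟩
  simp only [mem_iUnion]
  rintro ⟨q, hqr, hxq⟩
  obtain rfl : q = p := hd.eq (not_disjoint_iff.2 ⟨x, hxq, hx⟩)
  exact hqr.not_gt hrp

namespace FNWitness

variable {X : Type*} {F : Set (Set X)} {u l : Set X → Set (Set X)}

lemma exists_mem_frequently_mem (h : FNWitness F u l) {V : Set X} (hV : V ∈ F)
    {ι : Type*} {f : Filter ι} [f.NeBot] {W : ι → Set X} (hW : ∀ i, W i ∈ F)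
    (hVW : ∀ᶠ i in f, V ⊆ W i) : ∃ U ∈ u V, ∃ᶠ i in f, U ∈ l (W i) :=
  (h.1 V hV).1.frequently_exists.1
    (hVW.mono fun i hi => h.2.2 V hV (W i) (hW i) hi).frequently

lemma not_strictMono (h : FNWitness F u l) (V : ℝ → Set X) (hVF : ∀ r, V r ∈ F) :
    ¬ StrictMono V := by
  intro hV
  have hU : ∀ r, ∃ U ∈ u (V r), ∃ᶠ q : ℚ in comap (↑) (𝓝[>] r), U ∈ l (V q) := by
    intro r
    have := Rat.comap_cast_nhdsGT_neBot r
    exact h.exists_mem_frequently_mem (hVF r) (fun q => hVF q)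
      ((eventually_nhdsWithin_of_forall fun s hs => (hV hs).le).comap _)
  choose U hUu hUl using hU
  have hinj : Injective U := by
    refine Injective.of_lt_imp_ne fun r s hrs hUrs => ?_
    have hlt : ∀ᶠ q : ℚ in comap (↑) (𝓝[>] r), (q : ℝ) < s :=
      ((eventually_lt_nhds hrs).filter_mono nhdsWithin_le_nhds).comap _
    obtain ⟨q, hUq, hqs⟩ := ((hUl r).and_eventually hlt).exists
    have hsq : V s ⊆ V q :=
      (((h.1 _ (hVF s)).2 _ (hUu s)).2).trans (hUrs ▸ ((h.2.1 _ (hVF q)).2 _ hUq).2)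
    exact not_le_of_gt (hV hqs) hsq
  have hmaps : MapsTo U univ (⋃ q : ℚ, l (V q)) := fun r _ => mem_iUnion.2 (hUl r).exists
  exact Cardinal.not_countable_real (hmaps.countable_of_injOn hinj.injOn
    (countable_iUnion fun q => (h.2.1 _ (hVF q)).1.countable))

end FNWitness

/-- In an infinite regular Hausdorff space, the topology does not have the FN
property. -/
theorem topology_not_hasFN {X : Type*} [TopologicalSpace X] [T3Space X]
    [Infinite X] :
    ¬ HasFN {U : Set X | IsOpen U} := by
  rintro ⟨u, l, h⟩
  obtain ⟨G, hGinf, hGo, hGd⟩ := exists_seq_infinite_isOpen_pairwise_disjoint X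
  refine h.not_strictMono (fun r => ⋃ (q : ℚ) (_ : (q : ℝ) < r), G (Encodable.encode q))
    (fun r => isOpen_iUnion fun q => isOpen_iUnion fun _ => hGo _)
    (strictMono_iUnion_rat_lt (fun q => (hGinf _).nonempty) ?_)
  exact hGd.comp_of_injective Encodable.encode_injective
end

section
/- Let X be a compact Hausdorff space with the π-FNS property. Then Player I has a winning strategy in the open-open game on X: there exists a function σ assigning to every finite sequence (D₀,…,D_n) of finite families of nonempty open subsets of X a finite family σ(D₀,…,D_n) of nonempty open subsets of X, such that for every sequence (D_n)_{n∈ℕ} of finite families of nonempty open sets satisfying: for each n and each U ∈ σ(D₀,…,D_{n-1}) there exists V ∈ D_n with V ⊆ U, the union ⋃_{n∈ℕ} ⋃D_n is dense in X. -/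
/-!
Player I maintains a finite family of members of an FNS π-base `B`. Each round adds the
FNS witnesses `s W` of every member `W` played so far, a member of `B` inside each of Player II's
answers, and a member of `B` inside each nonempty intersection of played sets.

If a nonempty open `O` missed all answers, take `U ∈ B` inside `O`. The witnesses `A ∈ s U`
containing `U` that are ever played form a finite family, so they are all played by some round,
and Player II is then forced to answer inside their intersection; the set `W ∈ B` played inside
that answer is disjoint from `U`. Now the FNS witness `W_U ∈ s U ∩ s W` is played (as a member
of `s W`), so `W ⊆ W_U`; but `W ⊆ W_W` and `W_U ∩ W_W = ∅`.
-/

open Set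

theorem FNSWitness.not_disjoint_of_forall_subset {X : Type*} {B : Set (Set X)}
    {s : Set X → Set (Set X)} (hs : FNSWitness B s) {U W : Set X} (hU : U ∈ B) (hW : W ∈ B)
    (hne : W.Nonempty) (hsub : ∀ A ∈ s U ∩ s W, U ⊆ A → W ⊆ A) : ¬Disjoint U W := by
  intro hUW
  obtain ⟨WU, hWU, WW, -, hdisj, hUWU, hWWW⟩ := hs.2 U hU W hW hUW
  exact hne.ne_empty (disjoint_self.1 (hdisj.mono (hsub WU hWU hUWU) hWWW))

theorem Directed.exists_subset_of_finite_subset_iUnion {α ι : Type*} [Nonempty ι]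
    {f : ι → Set α} (h : Directed (· ⊆ ·) f) {T : Set α} (hT : T.Finite)
    (hTf : T ⊆ ⋃ i, f i) : ∃ i, T ⊆ f i := by
  simpa using h.exists_mem_subset_of_finset_subset_biUnion (s := hT.toFinset) (by simpa using hTf)

theorem List.foldl_ofFn_succ {α β : Type*} (f : β → α → β) (b : β) (D : ℕ → α) (n : ℕ) :
    (List.ofFn fun i : Fin (n + 1) => D i).foldl f b =
      f ((List.ofFn fun i : Fin n => D i).foldl f b) (D n) := by
  rw [List.ofFn_succ', List.concat_eq_append, List.foldl_append]
  rfl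

section Strategy

variable {X : Type*} [TopologicalSpace X]

/-- One round of Player I's strategy: `P` is the family played so far, `D` Player II's answer,
and `pick O` a member of the π-base inside the nonempty open set `O`. -/
def fnsStep (s : Set X → Set (Set X)) (pick : Set X → Set X) (P D : Set (Set X)) :
    Set (Set X) :=
  P ∪ (⋃ W ∈ P, s W) ∪ pick '' {O ∈ D ∪ sInter '' 𝒫 P | IsOpen O ∧ O.Nonempty}

variable {s : Set X → Set (Set X)} {pick : Set X → Set X} {P D : Set (Set X)}

theorem subset_fnsStep : P ⊆ fnsStep s pick P D :=
  subset_union_left.trans subset_union_left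

theorem subset_fnsStep_of_mem {W : Set X} (hW : W ∈ P) : s W ⊆ fnsStep s pick P D :=
  (subset_biUnion_of_mem hW).trans (subset_union_right.trans subset_union_left)

theorem pick_mem_fnsStep {O : Set X} (hO : O ∈ D ∪ sInter '' 𝒫 P) (hOo : IsOpen O)
    (hne : O.Nonempty) : pick O ∈ fnsStep s pick P D :=
  Or.inr ⟨O, ⟨hO, hOo, hne⟩, rfl⟩

theorem fnsStep_subset {B : Set (Set X)} (hs : FNSWitness B s)
    (hpick : ∀ O, IsOpen O → O.Nonempty → pick O ∈ B ∧ pick O ⊆ O) (hPB : P ⊆ B) :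
    fnsStep s pick P D ⊆ B := by
  refine union_subset (union_subset hPB (iUnion₂_subset fun W hW => (hs.1 W (hPB hW)).1)) ?_
  rintro _ ⟨O, ⟨-, hOo, hne⟩, rfl⟩
  exact (hpick O hOo hne).1

theorem fnsStep_finite {B : Set (Set X)} (hs : FNSWitness B s) (hPB : P ⊆ B) (hP : P.Finite)
    (hD : D.Finite) : (fnsStep s pick P D).Finite :=
  ((hP.union (hP.biUnion fun W hW => (hs.1 W (hPB hW)).2)).union
    (((hD.union (hP.finite_subsets.image _)).subset (sep_subset _ _)).image _))

theorem foldl_fnsStep_subset_finite {B : Set (Set X)} (hs : FNSWitness B s)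
    (hpick : ∀ O, IsOpen O → O.Nonempty → pick O ∈ B ∧ pick O ⊆ O) :
    ∀ (L : List (Set (Set X))) (P : Set (Set X)), (∀ D ∈ L, D.Finite) → P ⊆ B → P.Finite →
      L.foldl (fnsStep s pick) P ⊆ B ∧ (L.foldl (fnsStep s pick) P).Finite
  | [], _, _, hPB, hP => ⟨hPB, hP⟩
  | D :: L, _, hL, hPB, hP =>
    foldl_fnsStep_subset_finite hs hpick L _ (fun D' hD' => hL D' (List.mem_cons_of_mem _ hD'))
      (fnsStep_subset hs hpick hPB) (fnsStep_finite hs hPB hP (hL D List.mem_cons_self))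

section Play

variable {B : Set (Set X)} {P D : ℕ → Set (Set X)}

theorem monotone_of_fnsStep (hP : ∀ n, P (n + 1) = fnsStep s pick (P n) (D n)) : Monotone P :=
  monotone_nat_of_le_succ fun n => hP n ▸ subset_fnsStep

theorem subset_iUnion_of_fnsStep (hP : ∀ n, P (n + 1) = fnsStep s pick (P n) (D n))
    {W : Set X} (hW : W ∈ ⋃ n, P n) : s W ⊆ ⋃ n, P n := by
  obtain ⟨n, hWn⟩ := mem_iUnion.1 hW
  exact (hP n ▸ subset_fnsStep_of_mem hWn).trans (subset_iUnion P (n + 1))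

theorem exists_answer_subset_sInter_of_fnsStep
    (hpick : ∀ O, IsOpen O → O.Nonempty → pick O ∈ B ∧ pick O ⊆ O)
    (hP : ∀ n, P (n + 1) = fnsStep s pick (P n) (D n))
    (hD : ∀ n, ∀ V ∈ D n, IsOpen V ∧ V.Nonempty)
    (hanswer : ∀ n, ∀ U ∈ P n, ∃ V ∈ D n, V ⊆ U)
    {T : Set (Set X)} (hT : T.Finite) (hTP : T ⊆ ⋃ n, P n) (hTo : ∀ A ∈ T, IsOpen A)
    (hne : (⋂₀ T).Nonempty) :
    ∃ W ∈ ⋃ n, P n, W ∈ B ∧ W ⊆ ⋂₀ T ∧ W ⊆ ⋃ n, ⋃₀ D n := by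
  obtain ⟨n, hTn⟩ :=
    (monotone_of_fnsStep hP).directed_le.exists_subset_of_finite_subset_iUnion hT hTP
  have hopen : IsOpen (⋂₀ T) := hT.isOpen_sInter hTo
  have hG : pick (⋂₀ T) ∈ P (n + 1) := hP n ▸ pick_mem_fnsStep (Or.inr ⟨T, hTn, rfl⟩) hopen hne
  obtain ⟨V, hVD, hVG⟩ := hanswer (n + 1) _ hG
  obtain ⟨hVo, hVne⟩ := hD (n + 1) V hVD
  obtain ⟨hWB, hWV⟩ := hpick V hVo hVne
  refine ⟨pick V, mem_iUnion.2 ⟨n + 2, hP (n + 1) ▸ pick_mem_fnsStep (Or.inl hVD) hVo hVne⟩,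
    hWB, hWV.trans (hVG.trans (hpick _ hopen hne).2), ?_⟩
  exact hWV.trans (subset_iUnion_of_subset (n + 1) (subset_sUnion_of_mem hVD))

theorem dense_iUnion_answers_of_fnsStep (hB : IsPiBase B) (hs : FNSWitness B s)
    (hpick : ∀ O, IsOpen O → O.Nonempty → pick O ∈ B ∧ pick O ⊆ O)
    (hP : ∀ n, P (n + 1) = fnsStep s pick (P n) (D n))
    (hD : ∀ n, ∀ V ∈ D n, IsOpen V ∧ V.Nonempty)
    (hanswer : ∀ n, ∀ U ∈ P n, ∃ V ∈ D n, V ⊆ U) :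
    Dense (⋃ n, ⋃₀ D n) := by
  refine dense_iff_inter_open.2 fun O hO hOne => ?_
  obtain ⟨U, hUB, hUO⟩ := hB.2 O hO hOne
  set T := {A ∈ s U | U ⊆ A ∧ A ∈ ⋃ n, P n}
  have hTs : T ⊆ s U := sep_subset _ _
  obtain ⟨W, hWP, hWB, hWT, hWD⟩ := exists_answer_subset_sInter_of_fnsStep hpick hP hD
    hanswer ((hs.1 U hUB).2.subset hTs) (fun A hA => hA.2.2)
    (fun A hA => (hB.1 A ((hs.1 U hUB).1 (hTs hA))).1)
    ((hB.1 U hUB).2.mono fun x hx A hA => hA.2.1 hx)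
  have hUW : ¬Disjoint U W := hs.not_disjoint_of_forall_subset hUB hWB (hB.1 W hWB).2
    fun A hA hUA => hWT.trans (sInter_subset_of_mem
      ⟨hA.1, hUA, subset_iUnion_of_fnsStep hP hWP hA.2⟩)
  obtain ⟨x, hxU, hxW⟩ := not_disjoint_iff.1 hUW
  exact ⟨x, hUO hxU, hWD hxW⟩

end Play

end Strategy

theorem player_I_winning_strategy_of_piFNS_general {X : Type*} [TopologicalSpace X]
    (h : HasPiFNS X) :
    ∃ σ : List (Set (Set X)) → Set (Set X),
      (∀ L : List (Set (Set X)),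
        (∀ D ∈ L, D.Finite ∧ ∀ U ∈ D, IsOpen U ∧ U.Nonempty) →
        (σ L).Finite ∧ ∀ U ∈ σ L, IsOpen U ∧ U.Nonempty) ∧
      ∀ D : ℕ → Set (Set X),
        (∀ n, (D n).Finite ∧ ∀ U ∈ D n, IsOpen U ∧ U.Nonempty) →
        (∀ n, ∀ U ∈ σ (List.ofFn fun i : Fin n => D i), ∃ V ∈ D n, V ⊆ U) →
        Dense (⋃ n, ⋃₀ D n) := by
  obtain ⟨B, hB, s, hs⟩ := h
  choose! pick hpick using hB.2
  refine ⟨fun L => L.foldl (fnsStep s pick) ∅, fun L hL => ?_, fun D hD hanswer => ?_⟩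
  · obtain ⟨hLB, hLfin⟩ := foldl_fnsStep_subset_finite hs hpick L ∅ (fun D hD => (hL D hD).1)
      (empty_subset B) finite_empty
    exact ⟨hLfin, fun U hU => hB.1 U (hLB hU)⟩
  · exact dense_iUnion_answers_of_fnsStep hB hs hpick (fun n => List.foldl_ofFn_succ _ _ D n)
      (fun n => (hD n).2) hanswer

/-- In a compact Hausdorff space with the π-FNS property, Player I has a
winning strategy in the (finite version of the) open-open game. -/
theorem player_I_winning_strategy_of_piFNS {X : Type*} [TopologicalSpace X]
    [CompactSpace X] [T2Space X] (h : HasPiFNS X) :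
    ∃ σ : List (Set (Set X)) → Set (Set X),
      (∀ L : List (Set (Set X)),
        (∀ D ∈ L, D.Finite ∧ ∀ U ∈ D, IsOpen U ∧ U.Nonempty) →
        (σ L).Finite ∧ ∀ U ∈ σ L, IsOpen U ∧ U.Nonempty) ∧
      ∀ D : ℕ → Set (Set X),
        (∀ n, (D n).Finite ∧ ∀ U ∈ D n, IsOpen U ∧ U.Nonempty) →
        (∀ n, ∀ U ∈ σ (List.ofFn fun i : Fin n => D i), ∃ V ∈ D n, V ⊆ U) →
        Dense (⋃ n, ⋃₀ D n) :=
  player_I_winning_strategy_of_piFNS_general h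
end

section
/- Every topological space that has a development consisting of point-finite open covers has the FN property. -/
/-!
Replace the development `W` by its refinement `R n = W 0 ∧ ⋯ ∧ W n` (all intersections
`U₀ ∩ ⋯ ∩ Uₙ` with `Uᵢ ∈ W i`), which is still a point-finite development and moreover
decreasing. Take as base the nonempty members of all `R n`. A member `V` of this base has only
finitely many supersets in it: pick `x ∈ V` and `N` with `St(x, R N) ⊆ V`. A superset of `V`
from a level `m ≥ N` lies in a member of `R N` containing `x`, so it equals `V`; the supersets
from the levels `m < N` contain `x`, so there are finitely many by point-finiteness.
Hence `u V = {supersets of V}` and `l V = {V}` witness the FN property.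
-/

theorem hasFN_of_finite_supersets {X : Type*} {F : Set (Set X)}
    (h : ∀ V ∈ F, {U ∈ F | V ⊆ U}.Finite) : HasFN F :=
  ⟨fun V => {U ∈ F | V ⊆ U}, fun V => {V},
    fun V hV => ⟨h V hV, fun _ hU => hU⟩,
    fun V hV => ⟨Set.finite_singleton V,
      fun _ hU => (Set.mem_singleton_iff.1 hU).symm ▸ ⟨hV, subset_rfl⟩⟩,
    fun _ _ W hW hVW => ⟨W, ⟨hW, hVW⟩, rfl⟩⟩

section Refinement

variable {X : Type*} (W : ℕ → Set (Set X))

def refinedCovers : ℕ → Set (Set X)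
  | 0 => W 0
  | n + 1 => Set.image2 (· ∩ ·) (refinedCovers n) (W (n + 1))

variable {W}

theorem isOpen_of_mem_refinedCovers [TopologicalSpace X] (hW : ∀ n, ∀ U ∈ W n, IsOpen U) :
    ∀ n, ∀ U ∈ refinedCovers W n, IsOpen U
  | 0 => hW 0
  | n + 1 => by
    rintro _ ⟨U, hU, V, hV, rfl⟩
    exact (isOpen_of_mem_refinedCovers hW n U hU).inter (hW (n + 1) V hV)

theorem sUnion_refinedCovers (hW : ∀ n, ⋃₀ W n = Set.univ) :
    ∀ n, ⋃₀ refinedCovers W n = Set.univ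
  | 0 => hW 0
  | n + 1 => by
    have ih := sUnion_refinedCovers hW n
    simp only [refinedCovers, Set.sUnion_image2, ← Set.inter_iUnion₂, ← Set.iUnion₂_inter,
      ← Set.sUnion_eq_biUnion, ih, hW (n + 1), Set.univ_inter]

theorem finite_mem_refinedCovers (hW : ∀ n, ∀ x : X, {U ∈ W n | x ∈ U}.Finite) (x : X) :
    ∀ n, {U ∈ refinedCovers W n | x ∈ U}.Finite
  | 0 => hW 0 x
  | n + 1 => by
    refine ((finite_mem_refinedCovers hW x n).image2 (· ∩ ·) (hW (n + 1) x)).subset ?_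
    rintro _ ⟨⟨U, hU, V, hV, rfl⟩, hxU, hxV⟩
    exact ⟨U, ⟨hU, hxU⟩, V, ⟨hV, hxV⟩, rfl⟩

theorem exists_superset_of_mem_refinedCovers :
    ∀ n, ∀ U ∈ refinedCovers W n, ∃ V ∈ W n, U ⊆ V
  | 0 => fun U hU => ⟨U, hU, subset_rfl⟩
  | _ + 1 => by
    rintro _ ⟨U, -, V, hV, rfl⟩
    exact ⟨V, hV, Set.inter_subset_right⟩

theorem exists_superset_mem_refinedCovers_of_le {m n : ℕ} (hmn : m ≤ n) :
    ∀ U ∈ refinedCovers W n, ∃ V ∈ refinedCovers W m, U ⊆ V := by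
  induction n, hmn using Nat.le_induction with
  | base => exact fun U hU => ⟨U, hU, subset_rfl⟩
  | succ n _ ih =>
    rintro _ ⟨U, hU, V, -, rfl⟩
    obtain ⟨U', hU', hUU'⟩ := ih U hU
    exact ⟨U', hU', Set.inter_subset_left.trans hUU'⟩

end Refinement

section Development

variable {X : Type*} [TopologicalSpace X]

def IsDevelopment (R : ℕ → Set (Set X)) : Prop :=
  ∀ x : X, ∀ U : Set X, IsOpen U → x ∈ U → ∃ n, ⋃₀ {V ∈ R n | x ∈ V} ⊆ U

theorem IsDevelopment.of_refines {R W : ℕ → Set (Set X)} (hW : IsDevelopment W)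
    (hRW : ∀ n, ∀ U ∈ R n, ∃ V ∈ W n, U ⊆ V) : IsDevelopment R := by
  intro x U hU hxU
  obtain ⟨n, hn⟩ := hW x U hU hxU
  refine ⟨n, Set.sUnion_subset ?_⟩
  rintro V ⟨hV, hxV⟩
  obtain ⟨V', hV', hVV'⟩ := hRW n V hV
  exact hVV'.trans fun _ hy => hn ⟨V', ⟨hV', hVV' hxV⟩, hy⟩

variable {R : ℕ → Set (Set X)}

theorem IsDevelopment.isTopBase (hR : IsDevelopment R) (hopen : ∀ n, ∀ U ∈ R n, IsOpen U)
    (hcover : ∀ n, ⋃₀ R n = Set.univ) : IsTopBase {U ∈ ⋃ n, R n | U.Nonempty} := by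
  refine ⟨fun U hU => ?_, fun U hU => ⟨{V ∈ {U ∈ ⋃ n, R n | U.Nonempty} | V ⊆ U},
    fun V hV => hV.1, subset_antisymm (fun x hxU => ?_) (Set.sUnion_subset fun V hV => hV.2)⟩⟩
  · obtain ⟨n, hU⟩ := Set.mem_iUnion.1 hU.1
    exact hopen n U hU
  · obtain ⟨n, hn⟩ := hR x U hU hxU
    obtain ⟨V, hV, hxV⟩ := Set.sUnion_eq_univ_iff.1 (hcover n) x
    exact ⟨V, ⟨⟨Set.mem_iUnion.2 ⟨n, hV⟩, x, hxV⟩,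
      fun _ hy => hn ⟨V, ⟨hV, hxV⟩, hy⟩⟩, hxV⟩

theorem IsDevelopment.finite_supersets (hR : IsDevelopment R)
    (hopen : ∀ n, ∀ U ∈ R n, IsOpen U) (hpf : ∀ n, ∀ x : X, {U ∈ R n | x ∈ U}.Finite)
    (hanti : ∀ {m n : ℕ}, m ≤ n → ∀ U ∈ R n, ∃ V ∈ R m, U ⊆ V)
    {V : Set X} {k : ℕ} (hV : V ∈ R k) (hne : V.Nonempty) :
    {U ∈ ⋃ n, R n | V ⊆ U}.Finite := by
  obtain ⟨x, hxV⟩ := hne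
  obtain ⟨N, hN⟩ := hR x V (hopen k V hV) hxV
  refine (((Set.finite_Iio N).biUnion fun m _ => hpf m x).insert V).subset ?_
  rintro U ⟨hU, hVU⟩
  obtain ⟨m, hU⟩ := Set.mem_iUnion.1 hU
  rcases lt_or_ge m N with hm | hm
  · exact Or.inr (Set.mem_biUnion hm ⟨hU, hVU hxV⟩)
  · obtain ⟨U', hU', hUU'⟩ := hanti hm U hU
    have hU'V : U' ⊆ V := fun _ hy => hN ⟨U', ⟨hU', hUU' (hVU hxV)⟩, hy⟩
    exact Or.inl (subset_antisymm (hUU'.trans hU'V) hVU)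

end Development

/-- A space with a development consisting of point-finite open covers has the
FN property. -/
theorem hasFN_of_pointFinite_development {X : Type*} [TopologicalSpace X]
    (W : ℕ → Set (Set X))
    (hcover : ∀ n, (∀ U ∈ W n, IsOpen U) ∧ ⋃₀ W n = Set.univ)
    (hpf : ∀ n, ∀ x : X, {U ∈ W n | x ∈ U}.Finite)
    (hdev : ∀ x : X, ∀ U : Set X, IsOpen U → x ∈ U →
      ∃ n, ⋃₀ {V ∈ W n | x ∈ V} ⊆ U) :
    ∃ B : Set (Set X), IsTopBase B ∧ HasFN B := by
  have hopen := isOpen_of_mem_refinedCovers fun n => (hcover n).1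
  have hR : IsDevelopment (refinedCovers W) :=
    IsDevelopment.of_refines hdev exists_superset_of_mem_refinedCovers
  refine ⟨_, hR.isTopBase hopen (sUnion_refinedCovers fun n => (hcover n).2),
    hasFN_of_finite_supersets fun V hV => ?_⟩
  obtain ⟨k, hVk⟩ := Set.mem_iUnion.1 hV.1
  exact (hR.finite_supersets hopen (fun n x => finite_mem_refinedCovers hpf x n)
    exists_superset_mem_refinedCovers_of_le hVk hV.2).subset fun U hU => ⟨hU.1.1, hU.2⟩
end

section
/- If B_X is a π-base of a topological space X and f : Z → X is an irreducible map, then the family {f⁻¹(B) : B ∈ B_X} is a π-base of Z. -/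
/-- The small image `f^#(U) = {y : f⁻¹(y) ⊆ U}`. -/
def smallImage {Z Y : Type*} (f : Z → Y) (U : Set Z) : Set Y :=
  {y | f ⁻¹' {y} ⊆ U}

/-- An irreducible map: a continuous closed surjection such that no proper
closed subset of the domain maps onto the codomain. -/
def IsIrreducibleMap {Z Y : Type*} [TopologicalSpace Z] [TopologicalSpace Y]
    (f : Z → Y) : Prop :=
  Continuous f ∧ IsClosedMap f ∧ Function.Surjective f ∧
  ∀ F : Set Z, IsClosed F → F ≠ Set.univ → f '' F ≠ Set.univ

/-! The small image `f^#(U)` of a nonempty open `U` is a nonempty open set whose preimage lies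
in `U`: it is open because `f` is closed, and nonempty because `f` is irreducible. -/

section SmallImage

variable {Z Y : Type*} (f : Z → Y) (U : Set Z)

theorem smallImage_eq_compl_image_compl : smallImage f U = (f '' Uᶜ)ᶜ := by
  ext y
  simp [smallImage, Set.subset_def, not_imp_comm]

theorem preimage_smallImage_subset : f ⁻¹' smallImage f U ⊆ U :=
  fun _ hz => hz rfl

variable {f U} [TopologicalSpace Z] [TopologicalSpace Y]

theorem IsClosedMap.isOpen_smallImage (hf : IsClosedMap f) (hU : IsOpen U) :
    IsOpen (smallImage f U) := by
  rw [smallImage_eq_compl_image_compl]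
  exact (hf _ hU.isClosed_compl).isOpen_compl

theorem IsIrreducibleMap.smallImage_nonempty (hf : IsIrreducibleMap f) (hU : IsOpen U)
    (hne : U.Nonempty) : (smallImage f U).Nonempty := by
  rw [smallImage_eq_compl_image_compl, Set.nonempty_compl]
  exact hf.2.2.2 _ hU.isClosed_compl (Set.compl_ne_univ.mpr hne)

end SmallImage

theorem IsPiBase.preimage {Z X : Type*} [TopologicalSpace Z] [TopologicalSpace X]
    {f : Z → X} (hc : Continuous f) (hs : Function.Surjective f)
    (hf : ∀ U : Set Z, IsOpen U → U.Nonempty → ∃ V : Set X, IsOpen V ∧ V.Nonempty ∧ f ⁻¹' V ⊆ U)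
    {BX : Set (Set X)} (hBX : IsPiBase BX) :
    IsPiBase ((fun B => f ⁻¹' B) '' BX) := by
  refine ⟨?_, fun U hU hne => ?_⟩
  · rintro _ ⟨B, hB, rfl⟩
    exact ⟨(hBX.1 B hB).1.preimage hc, (hBX.1 B hB).2.preimage hs⟩
  · obtain ⟨V, hVo, hVne, hVU⟩ := hf U hU hne
    obtain ⟨B, hB, hBV⟩ := hBX.2 V hVo hVne
    exact ⟨f ⁻¹' B, ⟨B, hB, rfl⟩, (Set.preimage_mono hBV).trans hVU⟩

/-- Preimages of a π-base under an irreducible map form a π-base. -/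
theorem piBase_preimage_of_irreducible {Z X : Type*} [TopologicalSpace Z]
    [TopologicalSpace X] (f : Z → X) (hf : IsIrreducibleMap f)
    (BX : Set (Set X)) (hBX : IsPiBase BX) :
    IsPiBase ((fun B => f ⁻¹' B) '' BX) := by
  exact hBX.preimage hf.1 hf.2.2.1 fun U hU hne =>
    ⟨smallImage f U, hf.2.1.isOpen_smallImage hU, hf.smallImage_nonempty hU hne,
      preimage_smallImage_subset f U⟩
end

section
/- The Čech–Stone compactification βℕ of the discrete space of natural numbers does not have the FNS property: no base of βℕ has the FNS property. -/
open Set Filter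

lemma Set.Countable.exists_infinite_forall_subset_imp_finite {D : Set (Set ℕ)}
    (hD : D.Countable) : ∃ a : Set ℕ, a.Infinite ∧ ∀ d ∈ D, d ⊆ a → d.Finite := by
  obtain ⟨b, hDb⟩ := countable_iff_exists_subset_range.mp hD
  -- `φ (2n) ∈ b n` whenever `b n` is infinite, and the injective `φ` keeps it out of the
  -- range of the odd-indexed values.
  have hfreq : ∀ n, ∃ᶠ k in atTop, k ∈ b (n / 2) ∨ (b (n / 2)).Finite := fun n => by
    by_cases hfin : (b (n / 2)).Finite
    · exact Frequently.of_forall fun _ => Or.inr hfin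
    · exact (Nat.frequently_atTop_iff_infinite.mpr hfin).mono fun _ => Or.inl
  obtain ⟨φ, hφ, hφb⟩ := extraction_forall_of_frequently hfreq
  refine ⟨range fun n => φ (2 * n + 1),
    infinite_range_of_injective (hφ.injective.comp fun m n h => by omega), ?_⟩
  rintro d hd hda
  obtain ⟨n, rfl⟩ := hDb hd
  by_contra hinf
  have heven : φ (2 * n) ∈ b n := by simpa [hinf] using hφb (2 * n)
  obtain ⟨m, hm⟩ := hda heven
  have := hφ.injective hm
  omega

lemma exists_isClopen_preimage_stoneCechUnit {α : Type*} [TopologicalSpace α] {a : Set α}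
    (ha : IsClopen a) :
    ∃ V : Set (StoneCech α), IsClopen V ∧ stoneCechUnit ⁻¹' V = a := by
  have hcont := (continuous_boolIndicator_iff_isClopen a).mpr ha
  refine ⟨stoneCechExtend hcont ⁻¹' {true},
    (isClopen_discrete _).preimage (continuous_stoneCechExtend hcont), ?_⟩
  rw [← preimage_comp, stoneCechExtend_extends, preimage_boolIndicator_true]

lemma isOpen_singleton_stoneCechUnit {α : Type*} [TopologicalSpace α] {x : α}
    (hx : IsClopen {x}) : IsOpen {stoneCechUnit x} := by
  obtain ⟨V, hV, hVx⟩ := exists_isClopen_preimage_stoneCechUnit hx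
  have hxV : stoneCechUnit x ∈ V := by simp [← mem_preimage, hVx]
  suffices V = {stoneCechUnit x} from this ▸ hV.isOpen
  refine Subset.antisymm ?_ (singleton_subset_iff.mpr hxV)
  calc V ⊆ closure (V ∩ range stoneCechUnit) :=
        denseRange_stoneCechUnit.open_subset_closure_inter hV.isOpen
    _ = {stoneCechUnit x} := by
        rw [← image_preimage_eq_inter_range, hVx, image_singleton, closure_singleton]

namespace IsTopBase

variable {X : Type*} [TopologicalSpace X] {B : Set (Set X)}

lemma singleton_mem (hB : IsTopBase B) {x : X} (hx : IsOpen {x}) : {x} ∈ B := by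
  obtain ⟨S, hSB, hS⟩ := hB.2 _ hx
  obtain ⟨W, hWS, hxW⟩ : x ∈ ⋃₀ S := hS ▸ rfl
  have hW : W = {x} := (Nonempty.subset_singleton_iff ⟨x, hxW⟩).mp (hS ▸ subset_sUnion_of_mem hWS)
  exact hW ▸ hSB hWS

lemma exists_finite_sUnion_eq (hB : IsTopBase B) {V : Set X} (hVc : IsCompact V)
    (hVo : IsOpen V) : ∃ T ⊆ B, T.Finite ∧ V = ⋃₀ T := by
  obtain ⟨S, hSB, rfl⟩ := hB.2 V hVo
  obtain ⟨T, hTS, hT, hcover⟩ := hVc.elim_finite_subcover_image (c := id)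
    (fun W hW => hB.1 W (hSB hW)) (by simp [sUnion_eq_biUnion])
  refine ⟨T, hTS.trans hSB, hT, (sUnion_mono hTS).antisymm' ?_⟩
  simpa [sUnion_eq_biUnion] using hcover

end IsTopBase

lemma FNSWitness.exists_subset_sInter_disjoint {X : Type*} {B : Set (Set X)}
    {s : Set X → Set (Set X)} (hs : FNSWitness B s) {U : Set X} (hU : U ∈ B)
    {T : Set (Set X)} (hTB : T ⊆ B) (hUT : Disjoint U (⋃₀ T)) :
    ∃ F ⊆ s U ∩ ⋃ W ∈ T, s W, U ⊆ ⋂₀ F ∧ Disjoint (⋂₀ F) (⋃₀ T) := by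
  have hsep : ∀ W ∈ T, ∃ A ∈ s U ∩ s W, U ⊆ A ∧ Disjoint A W := fun W hW => by
    obtain ⟨A, hA, A', -, hAA', hUA, hWA'⟩ :=
      hs.2 U hU W (hTB hW) (hUT.mono_right (subset_sUnion_of_mem hW))
    exact ⟨A, hA, hUA, hAA'.mono_right hWA'⟩
  choose! A hAs hUA hAW using hsep
  refine ⟨A '' T, ?_, ?_, ?_⟩
  · rintro _ ⟨W, hW, rfl⟩
    exact ⟨(hAs W hW).1, mem_biUnion hW (hAs W hW).2⟩
  · simpa [subset_sInter_iff] using hUA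
  · rw [disjoint_sUnion_right]
    exact fun W hW => (hAW W hW).mono_left (sInter_subset_of_mem (mem_image_of_mem A hW))

/-- No base of the Čech–Stone compactification of the discrete space `ℕ` has
the FNS property. -/
theorem stoneCechNat_not_FNS :
    ¬ ∃ B : Set (Set (StoneCech ℕ)), IsTopBase B ∧ HasFNS B := by
  rintro ⟨B, hB, s, hs⟩
  have hsingleton (n : ℕ) : {stoneCechUnit n} ∈ B :=
    hB.singleton_mem (isOpen_singleton_stoneCechUnit (isClopen_discrete _))
  let trace (F : Set (Set (StoneCech ℕ))) : Set ℕ := stoneCechUnit ⁻¹' ⋂₀ F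
  obtain ⟨a, ha_inf, ha⟩ := (countable_iUnion fun n =>
    (((hs.1 _ (hsingleton n)).2.finite_subsets.image trace).countable)
    ).exists_infinite_forall_subset_imp_finite
  obtain ⟨V, hV, hVa⟩ := exists_isClopen_preimage_stoneCechUnit (isClopen_discrete aᶜ)
  obtain ⟨T, hTB, hT, rfl⟩ := hB.exists_finite_sUnion_eq hV.isClosed.isCompact hV.isOpen
  have hsep : ∀ n ∈ a, ∃ F ⊆ s {stoneCechUnit n} ∩ ⋃ W ∈ T, s W,
      {stoneCechUnit n} ⊆ ⋂₀ F ∧ Disjoint (⋂₀ F) (⋃₀ T) := fun n hn =>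
    hs.exists_subset_sInter_disjoint (hsingleton n) hTB (by simpa [← mem_preimage, hVa] using hn)
  choose! F hF hnF hFT using hsep
  have htrace_sub (n : ℕ) (hn : n ∈ a) : trace (F n) ⊆ a := fun m hm => by
    by_contra hma
    exact (hFT n hn).notMem_of_mem_left hm (by simpa [← mem_preimage, hVa] using hma)
  have htrace_fin (n : ℕ) (hn : n ∈ a) : (trace (F n)).Finite :=
    ha _ (mem_iUnion.mpr ⟨n, F n, (hF n hn).trans inter_subset_left, rfl⟩) (htrace_sub n hn)
  have hE : (⋃ W ∈ T, s W).Finite := hT.biUnion fun W hW => (hs.1 W (hTB hW)).2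
  have hfamily : ((fun n => trace (F n)) '' a).Finite :=
    (hE.finite_subsets.image trace).subset <| image_subset_iff.mpr fun n hn =>
      mem_image_of_mem trace ((hF n hn).trans inter_subset_right)
  refine ha_inf ((hfamily.sUnion ?_).subset fun n hn => ⟨_, mem_image_of_mem _ hn, hnF n hn rfl⟩)
  rintro _ ⟨n, hn, rfl⟩
  exact htrace_fin n hn
end

section
/- The Čech–Stone compactification βℕ of the discrete space of natural numbers has the π-FNS property: there exists a π-base of βℕ with the FNS property. -/
/-!
Let `x₀, x₁, …` be distinct isolated points forming a dense subset of a T₁ space. The singletons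
`{xₙ}` together with the sets `Tₙ = X \ {x₀, …, xₙ₋₁}` form a π-base. Index every member
by the first `xₖ` it contains; of two disjoint members, the one with the smaller index `n` must be
`{xₙ}` (`Tₙ` contains every `xₘ` with `m ≥ n`), and the other lies in `Tₙ₊₁`. So
`{xₙ}` and `Tₙ₊₁` separate them, and both lie in the finite family `{{xₖ}, Tₖ₊₁ : k ≤ m}` of
every member of index `m ≥ n`. In `βℕ` the points of `ℕ` are such a sequence.
-/

open Set Function

lemma IsDenseInducing.isOpen_singleton {X Y : Type*} [TopologicalSpace X] [TopologicalSpace Y]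
    [T1Space X] {f : Y → X} (hf : IsDenseInducing f) {y : Y} (hy : IsOpen ({y} : Set Y)) :
    IsOpen ({f y} : Set X) := by
  obtain ⟨O, hO, hpre⟩ := hf.isInducing.isOpen_iff.1 hy
  have hyO : f y ∈ O := by rw [← mem_preimage, hpre]; rfl
  have hOsub : O ∩ range f ⊆ {f y} := by
    rintro _ ⟨hz, z, rfl⟩
    rw [← mem_preimage, hpre] at hz
    rw [hz]
    rfl
  have : O = {f y} := subset_antisymm
    (calc O ⊆ closure (O ∩ range f) := hf.dense.open_subset_closure_inter hO
      _ ⊆ closure {f y} := closure_mono hOsub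
      _ = {f y} := closure_singleton)
    (singleton_subset_iff.2 hyO)
  exact this ▸ hO

namespace IsolatedSequence

variable {X : Type*} (x : ℕ → X)

noncomputable def firstIndex (U : Set X) : ℕ := sInf {n | x n ∈ U}

def tailSet (n : ℕ) : Set X := (x '' Iio n)ᶜ

def piBase : Set (Set X) := range (fun n => {x n}) ∪ range (tailSet x)

noncomputable def fnsAssignment (U : Set X) : Set (Set X) :=
  ⋃ k ∈ Iic (firstIndex x U), {{x k}, tailSet x (k + 1)}

variable {x}

lemma subset_tailSet_of_le_firstIndex {V : Set X} {n : ℕ} (h : n ≤ firstIndex x V) :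
    V ⊆ tailSet x n := by
  rintro _ hv ⟨k, hk, rfl⟩
  exact (lt_of_lt_of_le hk h).not_ge (Nat.sInf_le hv)

variable (hx : Injective x)
include hx

lemma mem_tailSet_iff {n k : ℕ} : x k ∈ tailSet x n ↔ n ≤ k := by
  simp [tailSet, hx.mem_set_image]

lemma firstIndex_singleton (n : ℕ) : firstIndex x {x n} = n := by
  simp [firstIndex, hx.eq_iff]

lemma firstIndex_tailSet (n : ℕ) : firstIndex x (tailSet x n) = n := by
  simp only [firstIndex, mem_tailSet_iff hx]
  exact csInf_Ici

lemma apply_firstIndex_mem {U : Set X} (hU : U ∈ piBase x) : x (firstIndex x U) ∈ U := by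
  rcases hU with ⟨n, rfl⟩ | ⟨n, rfl⟩
  · rw [firstIndex_singleton hx]; rfl
  · rw [firstIndex_tailSet hx, mem_tailSet_iff hx]

lemma eq_singleton_of_disjoint_of_firstIndex_le {U V : Set X} (hU : U ∈ piBase x)
    (hV : V ∈ piBase x) (hUV : Disjoint U V) (hle : firstIndex x U ≤ firstIndex x V) :
    U = {x (firstIndex x U)} ∧ firstIndex x U < firstIndex x V := by
  have hVmem := apply_firstIndex_mem hx hV
  rcases hU with ⟨n, rfl⟩ | ⟨n, rfl⟩
  · rw [firstIndex_singleton hx] at hle ⊢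
    refine ⟨rfl, hle.lt_of_ne fun h => hUV.ne_of_mem rfl hVmem (congrArg x h)⟩
  · rw [firstIndex_tailSet hx] at hle
    exact absurd hVmem (hUV.notMem_of_mem_left ((mem_tailSet_iff hx).2 hle))

lemma exists_separation_of_firstIndex_le {U V : Set X} (hU : U ∈ piBase x) (hV : V ∈ piBase x)
    (hUV : Disjoint U V) (hle : firstIndex x U ≤ firstIndex x V) :
    ∃ WU ∈ fnsAssignment x U ∩ fnsAssignment x V, ∃ WV ∈ fnsAssignment x U ∩ fnsAssignment x V,
      Disjoint WU WV ∧ U ⊆ WU ∧ V ⊆ WV := by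
  obtain ⟨hUeq, hlt⟩ := eq_singleton_of_disjoint_of_firstIndex_le hx hU hV hUV hle
  set n := firstIndex x U
  have hmem : ∀ W : Set X, n ≤ firstIndex x W →
      {x n} ∈ fnsAssignment x W ∧ tailSet x (n + 1) ∈ fnsAssignment x W := fun W hW =>
    ⟨mem_biUnion (x := n) hW (by simp), mem_biUnion (x := n) hW (by simp)⟩
  refine ⟨{x n}, ⟨(hmem U le_rfl).1, (hmem V hle).1⟩,
    tailSet x (n + 1), ⟨(hmem U le_rfl).2, (hmem V hle).2⟩, ?_, hUeq.le,
    subset_tailSet_of_le_firstIndex hlt⟩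
  rw [disjoint_singleton_left, mem_tailSet_iff hx]
  exact Nat.not_succ_le_self n

lemma fnsWitness : FNSWitness (piBase x) (fnsAssignment x) := by
  refine ⟨fun U _ => ⟨?_, (finite_Iic _).biUnion fun _ _ => toFinite _⟩, fun U hU V hV hUV => ?_⟩
  · simp only [fnsAssignment, iUnion_subset_iff]
    rintro k - W (rfl | rfl)
    exacts [Or.inl ⟨k, rfl⟩, Or.inr ⟨k + 1, rfl⟩]
  rcases le_total (firstIndex x U) (firstIndex x V) with hle | hle
  · exact exists_separation_of_firstIndex_le hx hU hV hUV hle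
  · obtain ⟨WV, hWV, WU, hWU, hdisj, hV', hU'⟩ :=
      exists_separation_of_firstIndex_le hx hV hU hUV.symm hle
    rw [inter_comm] at hWV hWU
    exact ⟨WU, hWU, WV, hWV, hdisj.symm, hU', hV'⟩

lemma isPiBase [TopologicalSpace X] [T1Space X] (hopen : ∀ n, IsOpen {x n})
    (hdense : DenseRange x) : IsPiBase (piBase x) := by
  refine ⟨?_, fun U hU hne => ?_⟩
  · rintro _ (⟨n, rfl⟩ | ⟨n, rfl⟩)
    · exact ⟨hopen n, singleton_nonempty _⟩
    · exact ⟨((finite_Iio n).image x).isClosed.isOpen_compl,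
        ⟨x n, (mem_tailSet_iff hx).2 le_rfl⟩⟩
  · obtain ⟨n, hn⟩ := hdense.exists_mem_open hU hne
    exact ⟨{x n}, Or.inl ⟨n, rfl⟩, singleton_subset_iff.2 hn⟩

end IsolatedSequence

theorem hasPiFNS_of_denseRange_isolated {X : Type*} [TopologicalSpace X] [T1Space X]
    {x : ℕ → X} (hx : Injective x) (hopen : ∀ n, IsOpen {x n}) (hdense : DenseRange x) :
    HasPiFNS X :=
  ⟨_, IsolatedSequence.isPiBase hx hopen hdense, _, IsolatedSequence.fnsWitness hx⟩

/-- The Čech–Stone compactification of the discrete space `ℕ` has the π-FNS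
property. -/
theorem stoneCechNat_piFNS : HasPiFNS (StoneCech ℕ) :=
  hasPiFNS_of_denseRange_isolated injective_stoneCechUnit_of_t35Space
    (fun _ => isDenseInducing_stoneCechUnit.isOpen_singleton (isOpen_discrete _))
    denseRange_stoneCechUnit
end
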